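/- arXiv:1509.02086 — 5 statements merged into one kernel-verified Lean document; each statement's English description precedes it below -/
import Mathlib

section
/- Let Ṽ : ℝ≥0^ν → ℝ≥0 be locally Lipschitz and suppose that at every point r ∈ ℝ≥0^ν at which Ṽ is differentiable, ∇Ṽ(r)ᵀ (Γ^ℓ r) ≤ 0 for every ℓ = 1,…,s. Then for every admissible kinetics R ∈ K_A and every x ∈ ℝ≥0ⁿ, the composite function V = Ṽ ∘ R satisfies D⁺V(x) = limsup_{h→0⁺} (Ṽ(R(x + h Γ R(x))) − Ṽ(R(x)))/h ≤ 0. If moreover Ṽ(r) = 0 exactly when r ∈ ker Γ, then V(x) = 0 if and only if Γ R(x) = 0. -/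
/-!
Write `r = R x`, `v = Γ r` and `w = R'(x) v`. Then `w = M r` where `M = R'(x) Γ` is the
combination `∑ₗ ∂R_{jₗ}/∂x_{iₗ}(x) • Γ^ℓ` with nonnegative coefficients, so the hypothesis gives
`∇Ṽ(y) ⬝ M y ≤ 0` at every point `y ≥ 0` where `Ṽ` is differentiable; since `∇Ṽ` is locally
bounded, `∇Ṽ(y) ⬝ w ≤ ε` for such `y` close to `r`.

As `Ṽ` is merely Lipschitz, this bound is integrated along the lines parallel to `w` through a
small box at `r`: by Rademacher's theorem and Fubini, almost every such line meets the
non-differentiability set of `Ṽ` in a null set, and the segments stay in the orthant because `w`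
points inward at the faces containing `r` (`w_j ≥ 0` whenever `r_j = 0`, by admissibility).
Letting the box shrink gives `Ṽ(r + h w) - Ṽ(r) ≤ ε h` for small `h > 0`, and
`R(x + h v) = r + h w + o(h)` transfers this to the Dini quotient of `Ṽ ∘ R`.
-/

open Filter Set Topology

/-- Partial derivative ∂R_j/∂x_i at x. -/
noncomputable def pd {n ν : ℕ} (R : (Fin n → ℝ) → Fin ν → ℝ)
    (x : Fin n → ℝ) (j : Fin ν) (i : Fin n) : ℝ :=
  fderiv ℝ (fun y => R y j) x (Pi.single i 1)

/-- Admissible kinetics (A1)-(A4) for a reactant matrix `A`. -/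
structure IsAdmissible {n ν : ℕ} (A : Matrix (Fin n) (Fin ν) ℕ)
    (R : (Fin n → ℝ) → Fin ν → ℝ) : Prop where
  smooth : ContDiff ℝ 1 R
  nonneg : ∀ x, (∀ i, 0 ≤ x i) → ∀ j, 0 ≤ R x j
  vanish : ∀ x, (∀ i, 0 ≤ x i) → ∀ i j, 0 < A i j → x i = 0 → R x j = 0
  deriv_nonneg : ∀ x, (∀ i, 0 ≤ x i) → ∀ i j, 0 < A i j → 0 ≤ pd R x j i
  deriv_zero : ∀ x, (∀ i, 0 ≤ x i) → ∀ i j, A i j = 0 → pd R x j i = 0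
  deriv_pos : ∀ x, (∀ i, 0 < x i) → ∀ i j, 0 < A i j → 0 < pd R x j i

/-- Upper (right) Dini derivative of `V` along the vector field `f` at `x`,
`D⁺V(x) = limsup_{h→0⁺} (V(x + h f(x)) − V(x))/h`. -/
noncomputable def dini {m : ℕ} (V : (Fin m → ℝ) → ℝ)
    (f : (Fin m → ℝ) → (Fin m → ℝ)) (x : Fin m → ℝ) : ℝ :=
  Filter.limsup (fun h : ℝ => (V (x + h • f x) - V x) / h) (nhdsWithin 0 (Set.Ioi 0))

/-- The rank-one matrix `Γ^ℓ = e_j γ_iᵀ ∈ ℝ^{ν×ν}`. -/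
noncomputable def GammaEll {n ν : ℕ} (Γ : Matrix (Fin n) (Fin ν) ℝ) (i : Fin n) (j : Fin ν) :
    Matrix (Fin ν) (Fin ν) ℝ :=
  Matrix.vecMulVec (Pi.single j 1) (fun k => Γ i k)

open MeasureTheory

theorem LipschitzOnWith.sub_le_mul_of_ae_deriv_le {g : ℝ → ℝ} {K : NNReal} {a b ε : ℝ}
    (hab : a ≤ b) (hg : LipschitzOnWith K g (Icc a b))
    (hderiv : ∀ᵐ t, t ∈ Ioo a b → deriv g t ≤ ε) :
    g b - g a ≤ ε * (b - a) := by
  have hac : AbsolutelyContinuousOnInterval g a b := by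
    apply LipschitzOnWith.absolutelyContinuousOnInterval
    rwa [uIcc_of_le hab]
  have hle : deriv g ≤ᵐ[volume.restrict (Icc a b)] fun _ => ε := by
    rw [Measure.restrict_congr_set Ioo_ae_eq_Icc.symm, EventuallyLE,
      ae_restrict_iff' measurableSet_Ioo]
    exact hderiv
  calc g b - g a = ∫ t in a..b, deriv g t := hac.integral_deriv_eq_sub.symm
    _ ≤ ∫ _ in a..b, ε :=
      intervalIntegral.integral_mono_ae_restrict hab hac.intervalIntegrable_deriv
        intervalIntegrable_const hle
    _ = ε * (b - a) := by simp [mul_comm]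

section Lebesgue

variable {E : Type*} [NormedAddCommGroup E] [NormedSpace ℝ E] [FiniteDimensional ℝ E]
  [MeasurableSpace E] [BorelSpace E] (μ : Measure E) [μ.IsAddHaarMeasure]

theorem LipschitzWith.ae_ae_differentiableAt_add_smul {G : E → ℝ} {K : NNReal}
    (hG : LipschitzWith K G) (w : E) :
    ∀ᵐ u ∂μ, ∀ᵐ t : ℝ, DifferentiableAt ℝ G (u + t • w) := by
  have hmeas : MeasurableSet {p : E × ℝ | DifferentiableAt ℝ G (p.1 + p.2 • w)} :=
    (measurableSet_of_differentiableAt ℝ G).preimage (by fun_prop)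
  rw [Measure.ae_ae_comm hmeas]
  exact Eventually.of_forall fun t =>
    (quasiMeasurePreserving_add_right μ (t • w)).ae hG.ae_differentiableAt

theorem LipschitzWith.exists_mem_sub_le_of_fderiv_le {G : E → ℝ} {K : NNReal}
    (hG : LipschitzWith K G) {B : Set E} (hB : μ B ≠ 0) (w : E) {h ε : ℝ} (hh : 0 ≤ h)
    (hderiv : ∀ u ∈ B, ∀ t ∈ Ioo 0 h, DifferentiableAt ℝ G (u + t • w) →
      fderiv ℝ G (u + t • w) w ≤ ε) :
    ∃ u ∈ B, G (u + h • w) - G u ≤ ε * h := by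
  obtain ⟨u, hu, hdiff⟩ := Measure.exists_mem_of_measure_ne_zero_of_ae hB
    (ae_restrict_of_ae (hG.ae_ae_differentiableAt_add_smul μ w))
  have hline : ∀ t : ℝ, HasDerivAt (fun t : ℝ => u + t • w) w t := fun t => by
    simpa using ((hasDerivAt_id t).smul_const w).const_add u
  have hlip : LipschitzWith (K * ‖w‖₊) fun t : ℝ => G (u + t • w) :=
    hG.comp <| (lipschitzWith_iff_dist_le_mul.2 fun s t => by
      simp [dist_eq_norm, ← sub_smul, norm_smul, mul_comm])
  refine ⟨u, hu, ?_⟩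
  simpa using hlip.lipschitzOnWith.sub_le_mul_of_ae_deriv_le hh <| by
    filter_upwards [hdiff] with t hdiff_t ht
    have hg : HasDerivAt (fun t => G (u + t • w)) (fderiv ℝ G (u + t • w) w) t :=
      hdiff_t.hasFDerivAt.comp_hasDerivAt t (hline t)
    rw [hg.deriv]
    exact hderiv u hu t ht hdiff_t

end Lebesgue

section Orthant

variable {ι : Type*} [Fintype ι]

theorem eventually_nonneg_add_smul {r w : ι → ℝ} (hr : 0 ≤ r) (hw : ∀ j, r j = 0 → 0 ≤ w j) :
    ∀ᶠ t in 𝓝[≥] (0 : ℝ), 0 ≤ r + t • w := by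
  simp only [Pi.le_def, Pi.zero_apply, Pi.add_apply, Pi.smul_apply, smul_eq_mul,
    eventually_all]
  intro j
  rcases (show (0 : ℝ) ≤ r j from hr j).eq_or_lt with hr0 | hrpos
  · filter_upwards [self_mem_nhdsWithin] with t (ht : 0 ≤ t)
    rw [← hr0, zero_add]
    exact mul_nonneg ht (hw j hr0.symm)
  · have hcont : Tendsto (fun t : ℝ => r j + t * w j) (𝓝 0) (𝓝 (r j)) := by
      have : Continuous fun t : ℝ => r j + t * w j := by fun_prop
      simpa using this.tendsto 0
    exact nhdsWithin_le_nhds ((hcont.eventually (lt_mem_nhds hrpos)).mono fun _ => le_of_lt)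

theorem norm_sub_le_of_mem_Icc_add_const {r u : ι → ℝ} {m : ℝ} (hm : 0 ≤ m)
    (hu : u ∈ Icc r (r + fun _ => m)) : ‖u - r‖ ≤ m :=
  (pi_norm_le_iff_of_nonneg hm).2 fun j => by
    rw [Real.norm_eq_abs, abs_le, Pi.sub_apply]
    constructor <;> linarith [hu.1 j, show u j ≤ r j + m from hu.2 j]

theorem LipschitzWith.sub_le_mul_add_of_fderiv_le_on_Icc {G : (ι → ℝ) → ℝ} {K : NNReal}
    (hG : LipschitzWith K G) {r w : ι → ℝ} {h m ε : ℝ} (hh : 0 ≤ h) (hm : 0 < m)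
    (hderiv : ∀ u ∈ Icc r (r + fun _ => m), ∀ t ∈ Ioo 0 h, DifferentiableAt ℝ G (u + t • w) →
      fderiv ℝ G (u + t • w) w ≤ ε) :
    G (r + h • w) - G r ≤ ε * h + 2 * K * m := by
  have hB : volume (Icc r (r + fun _ => m)) ≠ 0 := by simp [Real.volume_Icc_pi, hm]
  obtain ⟨u, hu, hinc⟩ := hG.exists_mem_sub_le_of_fderiv_le volume hB w hh hderiv
  have hend := hG.le_add_mul (r + h • w) (u + h • w)
  have hstart := hG.le_add_mul u r
  rw [dist_add_right, dist_comm, dist_eq_norm] at hend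
  rw [dist_eq_norm] at hstart
  have hnear := mul_le_mul_of_nonneg_left (norm_sub_le_of_mem_Icc_add_const hm.le hu) K.coe_nonneg
  linarith

theorem LipschitzWith.eventually_sub_le_of_fderiv_le {G : (ι → ℝ) → ℝ} {K : NNReal}
    (hG : LipschitzWith K G) {r w : ι → ℝ} (hr : 0 ≤ r) (hw : ∀ j, r j = 0 → 0 ≤ w j)
    {ε : ℝ} (hderiv : ∀ᶠ y in 𝓝 r, 0 ≤ y → DifferentiableAt ℝ G y → fderiv ℝ G y w ≤ ε) :
    ∀ᶠ h in 𝓝[>] 0, G (r + h • w) - G r ≤ ε * h := by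
  obtain ⟨δ, hδ, hball⟩ := Metric.eventually_nhds_iff_ball.1 hderiv
  obtain ⟨h₁, hh₁, hnonneg⟩ :=
    mem_nhdsGE_iff_exists_Ico_subset.1 (eventually_nonneg_add_smul hr hw)
  have hh₂ : 0 < δ / (2 * (‖w‖ + 1)) := by positivity
  filter_upwards [Ioo_mem_nhdsGT (lt_min hh₁ hh₂)] with h ⟨hpos, hlt⟩
  have hhw : h * ‖w‖ < δ / 2 := by
    have := (lt_div_iff₀ (by positivity)).1 (hlt.trans_le (min_le_right _ _))
    nlinarith [norm_nonneg w]
  -- The error `2 K m` made by starting the segments in a box of size `m` vanishes as `m → 0`.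
  have hbox : ∀ m ∈ Ioo 0 (δ / 2), G (r + h • w) - G r ≤ ε * h + 2 * K * m := by
    rintro m ⟨hm, hmδ⟩
    refine hG.sub_le_mul_add_of_fderiv_le_on_Icc hpos.le hm fun u hu t ht => hball _ ?_ ?_
    · rw [Metric.mem_ball, dist_eq_norm, add_sub_right_comm]
      calc ‖u - r + t • w‖ ≤ m + t * ‖w‖ := by
            grw [norm_add_le, norm_sub_le_of_mem_Icc_add_const hm.le hu, norm_smul,
              Real.norm_eq_abs, abs_of_pos ht.1]
        _ < δ / 2 + δ / 2 := by nlinarith [ht.2, norm_nonneg w]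
        _ = δ := add_halves δ
    · exact (hnonneg ⟨ht.1.le, ht.2.trans (hlt.trans_le (min_le_left _ _))⟩).trans
        (add_le_add_left hu.1 _)
  have hlim : Tendsto (fun m => ε * h + 2 * K * m) (𝓝[>] 0) (𝓝 (ε * h)) :=
    ((continuous_const.add (continuous_const.mul continuous_id)).tendsto' 0 _
      (by simp)).mono_left nhdsWithin_le_nhds
  exact ge_of_tendsto hlim (eventually_of_mem (Ioo_mem_nhdsGT (half_pos hδ)) hbox)

theorem LocallyLipschitz.eventually_sub_le_of_fderiv_le {V : (ι → ℝ) → ℝ}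
    (hV : LocallyLipschitz V) {r w : ι → ℝ} (hr : 0 ≤ r) (hw : ∀ j, r j = 0 → 0 ≤ w j) {ε : ℝ}
    (hderiv : ∀ᶠ y in 𝓝 r, 0 ≤ y → DifferentiableAt ℝ V y → fderiv ℝ V y w ≤ ε) :
    ∀ᶠ h in 𝓝[>] 0, V (r + h • w) - V r ≤ ε * h := by
  obtain ⟨K, t, ht, hK⟩ := hV r
  obtain ⟨G, hG, hVG_on⟩ := hK.extend_real
  have hVG : V =ᶠ[𝓝 r] G := eventuallyEq_of_mem ht hVG_on
  have hGderiv : ∀ᶠ y in 𝓝 r, 0 ≤ y → DifferentiableAt ℝ G y → fderiv ℝ G y w ≤ ε := by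
    filter_upwards [hderiv, hVG.eventuallyEq_nhds] with y hy hVGy hy0 hGy
    rw [← hVGy.fderiv_eq]
    exact hy hy0 (hVGy.differentiableAt_iff.2 hGy)
  have hseg : Tendsto (fun h : ℝ => r + h • w) (𝓝[>] 0) (𝓝 r) := by
    have : Continuous fun h : ℝ => r + h • w := by fun_prop
    simpa using (this.tendsto 0).mono_left nhdsWithin_le_nhds
  filter_upwards [hG.eventually_sub_le_of_fderiv_le hr hw hGderiv, hseg.eventually hVG]
    with h hGh hVGh
  rw [hVGh, hVG.eq_of_nhds]
  exact hGh

end Orthant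

section Normed

variable {E : Type*} [NormedAddCommGroup E] [NormedSpace ℝ E]

theorem LocallyLipschitz.eventually_fderiv_apply_le {V : E → ℝ} (hV : LocallyLipschitz V)
    (L : E →L[ℝ] E) {S : Set E}
    (hS : ∀ y ∈ S, DifferentiableAt ℝ V y → fderiv ℝ V y (L y) ≤ 0) (r : E) {ε : ℝ}
    (hε : 0 < ε) :
    ∀ᶠ y in 𝓝 r, y ∈ S → DifferentiableAt ℝ V y → fderiv ℝ V y (L r) ≤ ε := by
  obtain ⟨K, t, ht, hK⟩ := hV r
  have hsmall : ∀ᶠ y in 𝓝 r, K * ‖L (r - y)‖ < ε := by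
    have hcont : Continuous fun y => (K : ℝ) * ‖L (r - y)‖ := by fun_prop
    exact (hcont.tendsto' r 0 (by simp)).eventually (gt_mem_nhds hε)
  filter_upwards [Filter.Eventually.eventually_nhds ht, hsmall] with y hty hy hyS hyd
  have hnorm : ‖fderiv ℝ V y‖ ≤ K := norm_fderiv_le_of_lipschitzOn ℝ hty hK
  calc fderiv ℝ V y (L r) = fderiv ℝ V y (L y) + fderiv ℝ V y (L (r - y)) := by
        rw [← map_add, ← map_add, add_sub_cancel]
    _ ≤ 0 + ‖fderiv ℝ V y‖ * ‖L (r - y)‖ :=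
        add_le_add (hS y hyS hyd) ((le_abs_self _).trans ((fderiv ℝ V y).le_opNorm _))
    _ ≤ K * ‖L (r - y)‖ := by
        rw [zero_add]; exact mul_le_mul_of_nonneg_right hnorm (norm_nonneg _)
    _ ≤ ε := hy.le

variable {F : Type*} [NormedAddCommGroup F] [NormedSpace ℝ F]

theorem LocallyLipschitz.limsup_slope_add_smul_le {V : F → ℝ} (hV : LocallyLipschitz V) (p : F)
    {s : ℝ → F} {w : F} (hs : Tendsto s (𝓝[>] 0) (𝓝 w))
    (hinc : ∀ ε > 0, ∀ᶠ h in 𝓝[>] 0, V (p + h • w) - V p ≤ ε * h) :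
    limsup (fun h : ℝ => (V (p + h • s h) - V p) / h) (𝓝[>] 0) ≤ 0 := by
  obtain ⟨K, t, ht, hK⟩ := hV p
  have hnear : ∀ᶠ h in 𝓝[>] 0, p + h • s h ∈ t ∧ p + h • w ∈ t := by
    have hid : Tendsto (fun h : ℝ => h) (𝓝[>] 0) (𝓝 0) := nhdsWithin_le_nhds
    have h1 : Tendsto (fun h => p + h • s h) (𝓝[>] 0) (𝓝 p) := by
      simpa using tendsto_const_nhds.add (hid.smul hs)
    have h2 : Tendsto (fun h : ℝ => p + h • w) (𝓝[>] 0) (𝓝 p) := by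
      simpa using tendsto_const_nhds.add (hid.smul_const w)
    exact (h1.eventually ht).and (h2.eventually ht)
  have hupper : ∀ ε > 0, ∀ᶠ h in 𝓝[>] 0, (V (p + h • s h) - V p) / h ≤ ε := by
    intro ε hε
    have hsw : Tendsto (fun h => K * ‖s h - w‖) (𝓝[>] 0) (𝓝 0) := by
      simpa using ((tendsto_iff_norm_sub_tendsto_zero.1 hs).const_mul (K : ℝ))
    filter_upwards [self_mem_nhdsWithin, hnear, hinc (ε / 2) (half_pos hε),
      hsw.eventually (gt_mem_nhds (half_pos hε))] with h (hh : 0 < h) ⟨hst, hwt⟩ hinc_h hsw_h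
    have hlip := hK.le_add_mul hst hwt
    rw [dist_add_left, dist_eq_norm, ← smul_sub, norm_smul, Real.norm_of_nonneg hh.le] at hlip
    have hrem : (K : ℝ) * (h * ‖s h - w‖) ≤ ε / 2 * h := by
      rw [mul_left_comm, mul_comm]; exact mul_le_mul_of_nonneg_right hsw_h.le hh.le
    rw [div_le_iff₀ hh]
    linarith
  have hlower : ∀ᶠ h in 𝓝[>] 0, -(K * (‖w‖ + 1)) ≤ (V (p + h • s h) - V p) / h := by
    filter_upwards [self_mem_nhdsWithin, hnear,
      hs.norm.eventually (gt_mem_nhds (lt_add_one ‖w‖))] with h (hh : 0 < h) hnear_h hsh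
    have hlip := hK.le_add_mul (mem_of_mem_nhds ht) hnear_h.1
    rw [dist_comm, dist_self_add_left, norm_smul, Real.norm_of_nonneg hh.le] at hlip
    have hbound : (K : ℝ) * (h * ‖s h‖) ≤ K * ((‖w‖ + 1) * h) := by
      rw [mul_comm h]; gcongr
    rw [le_div_iff₀ hh]
    linarith
  refine le_of_forall_pos_le_add fun ε hε => ?_
  rw [zero_add]
  exact limsup_le_of_le (isCoboundedUnder_le_of_eventually_le _ hlower) (hupper ε hε)

theorem LocallyLipschitz.limsup_slope_comp_le {V : F → ℝ} {R : E → F} {x : E}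
    (hV : LocallyLipschitz V) (hR : DifferentiableAt ℝ R x) (v : E)
    (hinc : ∀ ε > 0, ∀ᶠ h in 𝓝[>] 0, V (R x + h • fderiv ℝ R x v) - V (R x) ≤ ε * h) :
    limsup (fun h : ℝ => (V (R (x + h • v)) - V (R x)) / h) (𝓝[>] 0) ≤ 0 := by
  set s : ℝ → F := fun h => h⁻¹ • (R (x + h • v) - R x)
  have hs : Tendsto s (𝓝[>] 0) (𝓝 (fderiv ℝ R x v)) := by
    have hline : HasDerivAt (fun h : ℝ => x + h • v) v 0 := by
      simpa using ((hasDerivAt_id (0 : ℝ)).smul_const v).const_add x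
    simpa [s] using
      (hR.hasFDerivAt.comp_hasDerivAt_of_eq 0 hline (by simp)).tendsto_slope_zero_right
  have hRs : ∀ᶠ h in 𝓝[>] (0 : ℝ), R (x + h • v) = R x + h • s h :=
    eventually_mem_nhdsWithin.mono fun h (hh : 0 < h) => by simp [s, smul_smul, hh.ne']
  calc limsup (fun h : ℝ => (V (R (x + h • v)) - V (R x)) / h) (𝓝[>] 0)
      = limsup (fun h : ℝ => (V (R x + h • s h) - V (R x)) / h) (𝓝[>] 0) :=
        limsup_congr (hRs.mono fun h hh => by rw [hh])
    _ ≤ 0 := hV.limsup_slope_add_smul_le (R x) hs hinc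

end Normed

section Kinetics

open Matrix

variable {n ν : ℕ}

theorem GammaEll_mulVec (Γ : Matrix (Fin n) (Fin ν) ℝ) (i : Fin n) (j : Fin ν)
    (r : Fin ν → ℝ) : GammaEll Γ i j *ᵥ r = Pi.single j ((Γ *ᵥ r) i) := by
  ext k
  simp [GammaEll, mulVec, vecMulVec, dotProduct, Pi.single_apply]

theorem fderiv_apply_eq_sum_pd {R : (Fin n → ℝ) → Fin ν → ℝ} {x : Fin n → ℝ}
    (hR : DifferentiableAt ℝ R x) (v : Fin n → ℝ) (j : Fin ν) :
    fderiv ℝ R x v j = ∑ i, pd R x j i * v i := by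
  conv_lhs => rw [pi_eq_sum_univ' v]
  simp [pd, fderiv_apply hR, mul_comm]

/-- The matrix `(∂R/∂x)(x) Γ` of the rate dynamics `ṙ = (∂R/∂x) Γ r`. -/
noncomputable def rateJacobian (R : (Fin n → ℝ) → Fin ν → ℝ) (Γ : Matrix (Fin n) (Fin ν) ℝ)
    (x : Fin n → ℝ) : Matrix (Fin ν) (Fin ν) ℝ :=
  ∑ p : Fin n × Fin ν, pd R x p.2 p.1 • GammaEll Γ p.1 p.2

theorem fderiv_mulVec_eq_rateJacobian_mulVec {R : (Fin n → ℝ) → Fin ν → ℝ} {x : Fin n → ℝ}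
    (hR : DifferentiableAt ℝ R x) (Γ : Matrix (Fin n) (Fin ν) ℝ) (r : Fin ν → ℝ) :
    fderiv ℝ R x (Γ *ᵥ r) = rateJacobian R Γ x *ᵥ r := by
  ext k
  simp [rateJacobian, fderiv_apply_eq_sum_pd hR, sum_mulVec, smul_mulVec, GammaEll_mulVec,
    Fintype.sum_prod_type, Pi.single_apply]

namespace IsAdmissible

variable {A : Matrix (Fin n) (Fin ν) ℕ} {R : (Fin n → ℝ) → Fin ν → ℝ} {x : Fin n → ℝ}

theorem differentiable (hR : IsAdmissible A R) : Differentiable ℝ R :=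
  hR.smooth.differentiable one_ne_zero

theorem pd_nonneg (hR : IsAdmissible A R) (hx : ∀ i, 0 ≤ x i) (i : Fin n) (j : Fin ν) :
    0 ≤ pd R x j i := by
  rcases Nat.eq_zero_or_pos (A i j) with hA | hA
  · exact (hR.deriv_zero x hx i j hA).ge
  · exact hR.deriv_nonneg x hx i j hA

theorem mulVec_apply_nonneg_of_eq_zero (hR : IsAdmissible A R) {B : Matrix (Fin n) (Fin ν) ℕ}
    {Γ : Matrix (Fin n) (Fin ν) ℝ} (hΓ : ∀ i j, Γ i j = (B i j : ℝ) - (A i j : ℝ))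
    (hx : ∀ i, 0 ≤ x i) {i : Fin n} (hxi : x i = 0) : 0 ≤ (Γ *ᵥ R x) i := by
  simp only [mulVec, dotProduct]
  refine Finset.sum_nonneg fun k _ => ?_
  rcases Nat.eq_zero_or_pos (A i k) with hA | hA
  · rw [hΓ, hA, Nat.cast_zero, sub_zero]
    exact mul_nonneg (Nat.cast_nonneg _) (hR.nonneg x hx k)
  · rw [hR.vanish x hx i k hA hxi, mul_zero]

theorem pd_eq_zero_of_apply_eq_zero (hR : IsAdmissible A R) (hx : ∀ i, 0 ≤ x i) {i : Fin n}
    {j : Fin ν} (hxi : 0 < x i) (hRj : R x j = 0) : pd R x j i = 0 := by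
  set e : Fin n → ℝ := Pi.single i 1
  set φ : ℝ → ℝ := fun t => R (x + t • e) j
  have hmin : IsLocalMin φ 0 := by
    filter_upwards [Ioo_mem_nhds (neg_neg_iff_pos.2 hxi) hxi] with t ht
    have hnonneg : ∀ k, 0 ≤ (x + t • e) k := fun k => by
      rcases eq_or_ne k i with rfl | hk
      · simpa [e] using (neg_lt_iff_pos_add'.1 ht.1).le
      · simpa [e, hk] using hx k
    simpa [φ, hRj] using hR.nonneg _ hnonneg j
  have hline : HasDerivAt (fun t : ℝ => x + t • e) e 0 := by
    simpa using ((hasDerivAt_id (0 : ℝ)).smul_const e).const_add x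
  have hRjx : DifferentiableAt ℝ (fun y => R y j) x :=
    differentiableAt_pi.1 (hR.differentiable x) j
  exact hmin.hasDerivAt_eq_zero <|
    hRjx.hasFDerivAt.comp_hasDerivAt_of_eq 0 hline (by simp)

theorem fderiv_apply_nonneg_of_apply_eq_zero (hR : IsAdmissible A R)
    {B : Matrix (Fin n) (Fin ν) ℕ} {Γ : Matrix (Fin n) (Fin ν) ℝ}
    (hΓ : ∀ i j, Γ i j = (B i j : ℝ) - (A i j : ℝ)) (hx : ∀ i, 0 ≤ x i) {j : Fin ν}
    (hRj : R x j = 0) : 0 ≤ fderiv ℝ R x (Γ *ᵥ R x) j := by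
  rw [fderiv_apply_eq_sum_pd (hR.differentiable x)]
  refine Finset.sum_nonneg fun i _ => ?_
  rcases (hx i).eq_or_lt with hxi | hxi
  · exact mul_nonneg (hR.pd_nonneg hx i j) (hR.mulVec_apply_nonneg_of_eq_zero hΓ hx hxi.symm)
  · rw [hR.pd_eq_zero_of_apply_eq_zero hx hxi hRj, zero_mul]

theorem fderiv_rateJacobian_mulVec_nonpos (hR : IsAdmissible A R) (hx : ∀ i, 0 ≤ x i)
    {Γ : Matrix (Fin n) (Fin ν) ℝ} {V : (Fin ν → ℝ) → ℝ}
    (hdec : ∀ r : Fin ν → ℝ, (∀ j, 0 ≤ r j) → DifferentiableAt ℝ V r →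
      ∀ i j, 0 < A i j → fderiv ℝ V r ((GammaEll Γ i j).mulVec r) ≤ 0)
    {y : Fin ν → ℝ} (hy : 0 ≤ y) (hVy : DifferentiableAt ℝ V y) :
    fderiv ℝ V y (rateJacobian R Γ x *ᵥ y) ≤ 0 := by
  rw [rateJacobian, sum_mulVec, map_sum]
  refine Finset.sum_nonpos fun p _ => ?_
  rw [smul_mulVec, map_smul, smul_eq_mul]
  rcases Nat.eq_zero_or_pos (A p.1 p.2) with hA | hA
  · rw [hR.deriv_zero x hx p.1 p.2 hA, zero_mul]
  · exact mul_nonpos_of_nonneg_of_nonpos (hR.pd_nonneg hx p.1 p.2) (hdec y hy hVy p.1 p.2 hA)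

end IsAdmissible

end Kinetics

theorem stmt1_general {n ν : ℕ} (A B : Matrix (Fin n) (Fin ν) ℕ)
    (Γ : Matrix (Fin n) (Fin ν) ℝ)
    (hΓ : ∀ i j, Γ i j = (B i j : ℝ) - (A i j : ℝ))
    (Vt : (Fin ν → ℝ) → ℝ) (hLip : LocallyLipschitz Vt)
    (hdec : ∀ r : Fin ν → ℝ, (∀ j, 0 ≤ r j) → DifferentiableAt ℝ Vt r →
      ∀ i j, 0 < A i j → fderiv ℝ Vt r ((GammaEll Γ i j).mulVec r) ≤ 0) :
    (∀ R, IsAdmissible A R → ∀ x : Fin n → ℝ, (∀ i, 0 ≤ x i) →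
        dini (fun y => Vt (R y)) (fun y => Γ.mulVec (R y)) x ≤ 0)
    ∧ ((∀ r : Fin ν → ℝ, (∀ j, 0 ≤ r j) → (Vt r = 0 ↔ Γ.mulVec r = 0)) →
        ∀ R, IsAdmissible A R → ∀ x : Fin n → ℝ, (∀ i, 0 ≤ x i) →
          (Vt (R x) = 0 ↔ Γ.mulVec (R x) = 0)) := by
  refine ⟨fun R hR x hx => ?_, fun hker R hR x hx => hker (R x) (hR.nonneg x hx)⟩
  refine hLip.limsup_slope_comp_le (hR.differentiable x) _ fun ε hε => ?_
  refine hLip.eventually_sub_le_of_fderiv_le (hR.nonneg x hx)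
    (fun j hj => hR.fderiv_apply_nonneg_of_apply_eq_zero hΓ hx hj) ?_
  have hgrad := hLip.eventually_fderiv_apply_le
    (Matrix.mulVecLin (rateJacobian R Γ x)).toContinuousLinearMap
    (fun y hy hVy => hR.fderiv_rateJacobian_mulVec_nonpos hx hdec hy hVy) (R x) hε
  rwa [fderiv_mulVec_eq_rateJacobian_mulVec (hR.differentiable x)]

/-- Theorem 3.1 (one direction): a common Lyapunov function for the linear systems
`ṙ = Γ^ℓ r` induces a robust Lyapunov function `V = Ṽ ∘ R` for the CRN family. -/
theorem stmt1 {n ν : ℕ} (A B : Matrix (Fin n) (Fin ν) ℕ)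
    (Γ : Matrix (Fin n) (Fin ν) ℝ)
    (hΓ : ∀ i j, Γ i j = (B i j : ℝ) - (A i j : ℝ))
    (Vt : (Fin ν → ℝ) → ℝ) (hLip : LocallyLipschitz Vt)
    (hVnn : ∀ r : Fin ν → ℝ, (∀ j, 0 ≤ r j) → 0 ≤ Vt r)
    (hdec : ∀ r : Fin ν → ℝ, (∀ j, 0 ≤ r j) → DifferentiableAt ℝ Vt r →
      ∀ i j, 0 < A i j → fderiv ℝ Vt r ((GammaEll Γ i j).mulVec r) ≤ 0) :
    (∀ R, IsAdmissible A R → ∀ x : Fin n → ℝ, (∀ i, 0 ≤ x i) →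
        dini (fun y => Vt (R y)) (fun y => Γ.mulVec (R y)) x ≤ 0)
    ∧ ((∀ r : Fin ν → ℝ, (∀ j, 0 ≤ r j) → (Vt r = 0 ↔ Γ.mulVec r = 0)) →
        ∀ R, IsAdmissible A R → ∀ x : Fin n → ℝ, (∀ i, 0 ≤ x i) →
          (Vt (R x) = 0 ↔ Γ.mulVec (R x) = 0)) :=
  stmt1_general A B Γ hΓ Vt hLip hdec
end

section
/- Let B ∈ ℝ^{q×n}, set C = BΓ ∈ ℝ^{q×ν}, assume ker C = ker Γ, and assume ker Γ contains a strictly positive vector (assumption AG). Then the following are equivalent: (1) for every admissible kinetics R ∈ K_A and every x ∈ ℝ≥0ⁿ, the upper Dini derivative of x ↦ ‖C R(x)‖_∞ along the vector field x ↦ ΓR(x) is nonpositive; (2) for every admissible kinetics R ∈ K_A, every equilibrium x_e of R (ΓR(x_e) = 0), and every x ∈ C_{x_e} = ({x_e} + im Γ) ∩ ℝ≥0ⁿ, the upper Dini derivative of x ↦ ‖B(x − x_e)‖_∞ along x ↦ ΓR(x) is nonpositive. -/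
/-!
Both Lyapunov conditions are equivalent to a linearized one: for every matrix `P` with the
sign pattern of `Aᵀ`, and every coordinate `k` and sign `σ` with `σ (C r)_k = ‖C r‖_∞`,
one has `σ (C P Γ r)_k ≤ 0`.

The upper Dini derivative of a sup norm `‖g h‖_∞` is at most `0` as soon as every active
coordinate of `g 0` has a nonincreasing derivative, and at least the derivative of each active
coordinate. Along the flow, `C R(x)` moves with velocity `C R'(x) Γ R(x)`, and `R'(x)` has the
sign pattern of `Aᵀ`. For the dual function, `x - x_e = Γ r` and the mean value theorem gives
`B Γ R(x) = C (R(x) - R(x_e)) = C P Γ r`, the rows of `P` being Jacobian rows taken on the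
segment `[x_e, x]`.

Conversely, any strict sign pattern `Q` and any positive rate vector `w` can be realized by a
polynomial admissible kinetics at a positive point. AG lets us take `w` with `Γ w = Γ r`
(for the rate function) or `w ∈ ker Γ`, an equilibrium (for the dual function, which then is
followed along `x₀ + s Γ r`). Letting `ε → 0` in `Q = P + ε 1_A` gives the linearized
condition for `P` itself.
-/

open Filter Set Topology

open Matrix

section OneSidedSlope

variable {E : Type*} [NormedAddCommGroup E] [NormedSpace ℝ E] {g : ℝ → E} {d : E}

lemma abs_div_sub_norm_le_norm_slope (g : ℝ → E) (h : ℝ) :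
    |(‖g h‖ - ‖g 0‖) / h| ≤ ‖slope g 0 h‖ := by
  rw [slope_def_module, sub_zero, norm_smul, norm_inv, Real.norm_eq_abs, abs_div,
    div_eq_inv_mul]
  exact mul_le_mul_of_nonneg_left (abs_norm_sub_norm_le _ _) (inv_nonneg.2 (abs_nonneg h))

lemma tendsto_slope_nhdsGT (hg : HasDerivAt g d 0) :
    Tendsto (slope g 0) (𝓝[>] 0) (𝓝 d) :=
  (hasDerivAt_iff_tendsto_slope.1 hg).mono_left (nhdsWithin_mono _ fun _ hh => ne_of_gt hh)

lemma HasDerivAt.nonpos_of_eventually_le {φ : ℝ → ℝ} {d : ℝ} (hφ : HasDerivAt φ d 0)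
    (h : ∀ᶠ s in 𝓝[>] 0, φ s ≤ φ 0) : d ≤ 0 := by
  refine le_of_tendsto (tendsto_slope_nhdsGT hφ) ?_
  filter_upwards [h, self_mem_nhdsWithin] with s hs (hs0 : 0 < s)
  rw [slope_def_field, sub_zero]
  exact div_nonpos_of_nonpos_of_nonneg (sub_nonpos.2 hs) hs0.le

lemma isBoundedUnder_div_sub_norm (hg : HasDerivAt g d 0) :
    IsBoundedUnder (· ≤ ·) (𝓝[>] 0) (fun h => (‖g h‖ - ‖g 0‖) / h) :=
  (tendsto_slope_nhdsGT hg).norm.isBoundedUnder_le.mono_le <|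
    Eventually.of_forall fun h => (le_abs_self _).trans (abs_div_sub_norm_le_norm_slope g h)

lemma isCoboundedUnder_div_sub_norm (hg : HasDerivAt g d 0) :
    IsCoboundedUnder (· ≤ ·) (𝓝[>] 0) (fun h => (‖g h‖ - ‖g 0‖) / h) := by
  obtain ⟨b, hb⟩ := (tendsto_slope_nhdsGT hg).norm.isBoundedUnder_le
  refine isCoboundedUnder_le_of_eventually_le _ (x := -b) ?_
  filter_upwards [eventually_map.1 hb] with h hh
  linarith [neg_abs_le ((‖g h‖ - ‖g 0‖) / h), abs_div_sub_norm_le_norm_slope g h]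

/-- The norm grows at most like the first-order model `g 0 + h • d`, up to `o(h)`. -/
lemma limsup_div_sub_norm_nonpos (hg : HasDerivAt g d 0)
    (hd : ∀ᶠ h : ℝ in 𝓝[>] 0, ‖g 0 + h • d‖ ≤ ‖g 0‖) :
    limsup (fun h => (‖g h‖ - ‖g 0‖) / h) (𝓝[>] 0) ≤ 0 := by
  have herr : Tendsto (fun h => ‖slope g 0 h - d‖) (𝓝[>] 0) (𝓝 0) := by
    simpa using ((tendsto_slope_nhdsGT hg).sub_const d).norm
  calc limsup (fun h => (‖g h‖ - ‖g 0‖) / h) (𝓝[>] 0)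
      ≤ limsup (fun h => ‖slope g 0 h - d‖) (𝓝[>] 0) := by
        refine limsup_le_limsup ?_ (isCoboundedUnder_div_sub_norm hg) herr.isBoundedUnder_le
        filter_upwards [hd, self_mem_nhdsWithin] with h hh (hpos : 0 < h)
        have hsplit : g h = h • (slope g 0 h - d) + (g 0 + h • d) := by
          rw [slope_def_module, sub_zero, smul_sub, smul_inv_smul₀ hpos.ne']
          abel
        rw [div_le_iff₀ hpos, sub_le_iff_le_add]
        calc ‖g h‖ ≤ ‖h • (slope g 0 h - d)‖ + ‖g 0 + h • d‖ := hsplit ▸ norm_add_le _ _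
          _ ≤ ‖slope g 0 h - d‖ * h + ‖g 0‖ := by
            rw [norm_smul, Real.norm_of_nonneg hpos.le, mul_comm]
            gcongr
    _ = 0 := herr.limsup_eq

lemma le_limsup_div_sub_norm (hg : HasDerivAt g d 0) (ℓ : E →L[ℝ] ℝ)
    (hℓ : ∀ v, ℓ v ≤ ‖v‖) (hℓg : ℓ (g 0) = ‖g 0‖) :
    ℓ d ≤ limsup (fun h => (‖g h‖ - ‖g 0‖) / h) (𝓝[>] 0) := by
  have hℓslope : Tendsto (fun h => ℓ (slope g 0 h)) (𝓝[>] 0) (𝓝 (ℓ d)) :=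
    (ℓ.continuous.tendsto d).comp (tendsto_slope_nhdsGT hg)
  rw [← hℓslope.limsup_eq]
  refine limsup_le_limsup ?_ hℓslope.isCoboundedUnder_le (isBoundedUnder_div_sub_norm hg)
  filter_upwards [self_mem_nhdsWithin] with h (hpos : 0 < h)
  rw [slope_def_module, sub_zero, map_smul, smul_eq_mul, inv_mul_eq_div, map_sub, hℓg]
  gcongr
  exact hℓ _

end OneSidedSlope

section SupNorm

variable {ι : Type*} [Fintype ι]

def IsNormingCoord (v : ι → ℝ) (k : ι) (σ : ℝ) : Prop :=
  (σ = 1 ∨ σ = -1) ∧ σ * v k = ‖v‖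

lemma mul_apply_le_norm_of_sign {σ : ℝ} (hσ : σ = 1 ∨ σ = -1) (u : ι → ℝ) (k : ι) :
    σ * u k ≤ ‖u‖ := by
  rcases hσ with rfl | rfl
  · simpa using (le_abs_self (u k)).trans (norm_le_pi_norm u k)
  · simpa using (neg_le_abs (u k)).trans (norm_le_pi_norm u k)

lemma IsNormingCoord.smul {v : ι → ℝ} {k : ι} {σ s : ℝ} (hk : IsNormingCoord v k σ)
    (hs : 0 < s) : IsNormingCoord (s • v) k σ := by
  refine ⟨hk.1, ?_⟩
  rw [Pi.smul_apply, smul_eq_mul, norm_smul, Real.norm_of_nonneg hs.le, ← hk.2]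
  ring

lemma eventually_norm_add_smul_le {w d : ι → ℝ}
    (hd : ∀ k σ, IsNormingCoord w k σ → σ * d k ≤ 0) :
    ∀ᶠ h : ℝ in 𝓝[>] 0, ‖w + h • d‖ ≤ ‖w‖ := by
  have hcoord : ∀ k σ, (σ = 1 ∨ σ = -1) →
      ∀ᶠ h : ℝ in 𝓝[>] 0, σ * (w k + h * d k) ≤ ‖w‖ := by
    intro k σ hσ
    rcases (mul_apply_le_norm_of_sign hσ w k).eq_or_lt with hact | hlt
    · filter_upwards [self_mem_nhdsWithin] with h (hpos : 0 < h)
      nlinarith [hd k σ ⟨hσ, hact⟩]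
    · have hcont : Tendsto (fun h : ℝ => σ * (w k + h * d k)) (𝓝[>] 0) (𝓝 (σ * w k)) := by
        refine (Continuous.tendsto' (by fun_prop) 0 _ ?_).mono_left nhdsWithin_le_nhds
        simp
      exact (hcont.eventually_lt_const hlt).mono fun _ => le_of_lt
  filter_upwards [eventually_all.2 fun k => (hcoord k 1 (.inl rfl)).and
    (hcoord k (-1) (.inr rfl))] with h hh
  refine pi_norm_le_iff_of_nonneg (norm_nonneg w) |>.2 fun k => ?_
  rw [Real.norm_eq_abs, abs_le]
  simp only [Pi.add_apply, Pi.smul_apply, smul_eq_mul]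
  constructor <;> linarith [(hh k).1, (hh k).2]

variable {m : ℕ} {G : (Fin m → ℝ) → ι → ℝ} {f : (Fin m → ℝ) → Fin m → ℝ} {x : Fin m → ℝ}
  {d : ι → ℝ}

lemma dini_norm_nonpos (hG : HasDerivAt (fun h : ℝ => G (x + h • f x)) d 0)
    (hd : ∀ k σ, IsNormingCoord (G x) k σ → σ * d k ≤ 0) :
    dini (fun y => ‖G y‖) f x ≤ 0 := by
  have h0 : G (x + (0 : ℝ) • f x) = G x := by simp
  have := limsup_div_sub_norm_nonpos hG (by rw [h0]; exact eventually_norm_add_smul_le hd)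
  simpa only [dini, h0] using this

lemma le_dini_norm (hG : HasDerivAt (fun h : ℝ => G (x + h • f x)) d 0) {k : ι} {σ : ℝ}
    (hk : IsNormingCoord (G x) k σ) :
    σ * d k ≤ dini (fun y => ‖G y‖) f x := by
  have h0 : G (x + (0 : ℝ) • f x) = G x := by simp
  have := le_limsup_div_sub_norm hG (σ • ContinuousLinearMap.proj k)
    (fun u => mul_apply_le_norm_of_sign hk.1 u k) (by simpa [h0] using hk.2)
  simpa only [dini, h0, _root_.smul_apply, ContinuousLinearMap.proj_apply,
    smul_eq_mul] using this

end SupNorm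

section Jacobian

variable {n ν : ℕ} {R : (Fin n → ℝ) → Fin ν → ℝ} {x : Fin n → ℝ}

noncomputable def jac (R : (Fin n → ℝ) → Fin ν → ℝ) (x : Fin n → ℝ) : Matrix (Fin ν) (Fin n) ℝ :=
  Matrix.of fun j i => pd R x j i

lemma fderiv_apply_eq_jac_mulVec (hR : DifferentiableAt ℝ R x) (v : Fin n → ℝ) :
    fderiv ℝ R x v = jac R x *ᵥ v := by
  ext j
  have hj : fderiv ℝ (fun y => R y j) x = (ContinuousLinearMap.proj j).comp (fderiv ℝ R x) :=
    (hasFDerivAt_pi'.1 hR.hasFDerivAt j).fderiv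
  conv_lhs => rw [pi_eq_sum_univ' v]
  simp [jac, pd, hj, Matrix.mulVec, dotProduct, mul_comm]

lemma hasDerivAt_comp_add_smul {v : Fin n → ℝ} {t : ℝ} (hR : DifferentiableAt ℝ R (x + t • v)) :
    HasDerivAt (fun h : ℝ => R (x + h • v)) (jac R (x + t • v) *ᵥ v) t := by
  have hline : HasDerivAt (fun h : ℝ => x + h • v) v t := by
    simpa using ((hasDerivAt_id t).smul_const v).const_add x
  have := hR.hasFDerivAt.comp_hasDerivAt t hline
  rwa [fderiv_apply_eq_jac_mulVec hR] at this

/-- The mean value theorem only holds row by row, so each row gets its own point `z j`. -/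
lemma exists_sub_eq_mulVec_of_segment (hR : Differentiable ℝ R) (x y : Fin n → ℝ) :
    ∃ z : Fin ν → Fin n → ℝ, (∀ j, z j ∈ segment ℝ x y) ∧
      R y - R x = (Matrix.of fun j => jac R (z j) j) *ᵥ (y - x) := by
  have hrow : ∀ j, ∃ t ∈ Set.Ioo (0 : ℝ) 1,
      R y j - R x j = (jac R (x + t • (y - x)) *ᵥ (y - x)) j := by
    intro j
    have hderiv : ∀ t : ℝ, HasDerivAt (fun h : ℝ => R (x + h • (y - x)) j)
        ((jac R (x + t • (y - x)) *ᵥ (y - x)) j) t :=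
      fun t => hasDerivAt_pi.1 (hasDerivAt_comp_add_smul (hR _)) j
    obtain ⟨t, ht, hslope⟩ := exists_hasDerivAt_eq_slope _ _ zero_lt_one
      (fun t _ => (hderiv t).continuousAt.continuousWithinAt) (fun t _ => hderiv t)
    exact ⟨t, ht, by simpa using hslope.symm⟩
  choose t ht hrow using hrow
  refine ⟨fun j => x + t j • (y - x), fun j => ?_, ?_⟩
  · rw [segment_eq_image']
    exact ⟨t j, Set.Ioo_subset_Icc_self (ht j), rfl⟩
  · ext j
    simpa [Matrix.mulVec] using hrow j

lemma HasDerivAt.const_mulVec {m k : Type*} [Fintype m] [Fintype k] {φ : ℝ → k → ℝ}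
    {φ' : k → ℝ} {t : ℝ} (M : Matrix m k ℝ) (hφ : HasDerivAt φ φ' t) :
    HasDerivAt (fun h => M *ᵥ φ h) (M *ᵥ φ') t :=
  (LinearMap.toContinuousLinearMap (Matrix.mulVecLin M)).hasFDerivAt.comp_hasDerivAt t hφ

lemma hasDerivAt_mulVec_comp_add_smul {m : Type*} [Fintype m] (M : Matrix m (Fin ν) ℝ)
    (hR : Differentiable ℝ R) (x v : Fin n → ℝ) :
    HasDerivAt (fun h : ℝ => M *ᵥ R (x + h • v)) (M *ᵥ (jac R x *ᵥ v)) 0 := by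
  simpa using (hasDerivAt_comp_add_smul (t := 0) (hR _)).const_mulVec M

lemma hasDerivAt_mulVec_add_smul_sub {m : Type*} [Fintype m] (M : Matrix m (Fin n) ℝ)
    (x v c : Fin n → ℝ) : HasDerivAt (fun h : ℝ => M *ᵥ (x + h • v - c)) (M *ᵥ v) 0 := by
  refine HasDerivAt.const_mulVec M ?_
  simpa using (((hasDerivAt_id (0 : ℝ)).smul_const v).const_add x).sub_const c

end Jacobian

section SignPattern

variable {n ν : ℕ} (A : Matrix (Fin n) (Fin ν) ℕ)

/-- Sign pattern of Jacobians of admissible kinetics on the closed orthant (note the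
transposition: `P` is `ν × n`). -/
def HasReactantSignPattern (P : Matrix (Fin ν) (Fin n) ℝ) : Prop :=
  ∀ i j, (0 < A i j → 0 ≤ P j i) ∧ (A i j = 0 → P j i = 0)

def HasStrictReactantSignPattern (P : Matrix (Fin ν) (Fin n) ℝ) : Prop :=
  ∀ i j, (0 < A i j → 0 < P j i) ∧ (A i j = 0 → P j i = 0)

def reactantIndicator : Matrix (Fin ν) (Fin n) ℝ :=
  Matrix.of fun j i => if 0 < A i j then 1 else 0

variable {A}

lemma HasReactantSignPattern.add_smul_reactantIndicator {P : Matrix (Fin ν) (Fin n) ℝ}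
    (hP : HasReactantSignPattern A P) {ε : ℝ} (hε : 0 < ε) :
    HasStrictReactantSignPattern A (P + ε • reactantIndicator A) := by
  intro i j
  simp only [Matrix.add_apply, Matrix.smul_apply, reactantIndicator, Matrix.of_apply,
    smul_eq_mul]
  refine ⟨fun hA => ?_, fun hA => ?_⟩
  · rw [if_pos hA, mul_one]
    exact add_pos_of_nonneg_of_pos ((hP i j).1 hA) hε
  · rw [if_neg (by omega), mul_zero, add_zero]
    exact (hP i j).2 hA

lemma IsAdmissible.hasReactantSignPattern_rows {R : (Fin n → ℝ) → Fin ν → ℝ}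
    (hR : IsAdmissible A R) {z : Fin ν → Fin n → ℝ} (hz : ∀ j i, 0 ≤ z j i) :
    HasReactantSignPattern A (Matrix.of fun j => jac R (z j) j) :=
  fun i j => ⟨hR.deriv_nonneg _ (hz j) i j, hR.deriv_zero _ (hz j) i j⟩

end SignPattern

section PolyRate

variable {n : ℕ} (S : Finset (Fin n)) (T a : ℝ) (b : Fin n → ℝ) (N : ℕ)

/-- A rate that vanishes on the faces `y l = 0`, `l ∈ S`, and whose value and partial
derivatives at the diagonal point `(T, …, T)` can be tuned through `a`, `b` and a large `N`. -/
noncomputable def polyRate (y : Fin n → ℝ) : ℝ :=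
  (∏ l ∈ S, y l / T) * (a + ∑ l ∈ S, b l * (y l / T) ^ N)

lemma contDiff_polyRate : ContDiff ℝ 1 (polyRate S T a b N) := by
  unfold polyRate
  fun_prop

lemma fderiv_polyRate_single (y : Fin n → ℝ) (i : Fin n) :
    fderiv ℝ (polyRate S T a b N) y (Pi.single i 1) = if i ∈ S then
      ((∏ l ∈ S.erase i, y l / T) * (a + ∑ l ∈ S, b l * (y l / T) ^ N)
        + (∏ l ∈ S, y l / T) * (b i * (N * (y i / T) ^ (N - 1)))) / T else 0 := by
  classical
  have hcoord : ∀ l, HasFDerivAt (fun y : Fin n → ℝ => y l / T)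
      (T⁻¹ • ContinuousLinearMap.proj (R := ℝ) (φ := fun _ : Fin n => ℝ) l) y := fun l => by
    simpa [div_eq_inv_mul] using HasFDerivAt.const_mul (hasFDerivAt_apply l y) T⁻¹
  have hprod := HasFDerivAt.finsetProd (u := S) fun l _ => hcoord l
  have hsum := (HasFDerivAt.fun_sum (u := S) fun l _ =>
    ((hcoord l).pow N).const_mul (b l)).const_add a
  unfold polyRate
  rw [(hprod.fun_mul hsum).fderiv]
  simp only [nsmul_eq_mul, _root_.add_apply, _root_.smul_apply, _root_.sum_apply,
    ContinuousLinearMap.proj_apply, Pi.single_apply, smul_eq_mul, mul_ite, mul_one, mul_zero,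
    Finset.sum_ite_eq']
  split_ifs <;> ring

variable {S T a b N} {y : Fin n → ℝ}

lemma polyRate_eq_zero {i : Fin n} (hi : i ∈ S) (hy : y i = 0) : polyRate S T a b N y = 0 := by
  rw [polyRate, Finset.prod_eq_zero hi (by rw [hy, zero_div]), zero_mul]

lemma add_sum_mul_div_pow_nonneg (hT : 0 < T) (ha : 0 ≤ a) (hb : ∀ l ∈ S, 0 ≤ b l)
    (hy : ∀ l, 0 ≤ y l) : 0 ≤ a + ∑ l ∈ S, b l * (y l / T) ^ N :=
  add_nonneg ha <| Finset.sum_nonneg fun l hl =>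
    mul_nonneg (hb l hl) (pow_nonneg (div_nonneg (hy l) hT.le) N)

lemma polyRate_nonneg (hT : 0 < T) (ha : 0 ≤ a) (hb : ∀ l ∈ S, 0 ≤ b l)
    (hy : ∀ l, 0 ≤ y l) : 0 ≤ polyRate S T a b N y :=
  mul_nonneg (Finset.prod_nonneg fun l _ => div_nonneg (hy l) hT.le)
    (add_sum_mul_div_pow_nonneg hT ha hb hy)

lemma fderiv_polyRate_single_nonneg (hT : 0 < T) (ha : 0 ≤ a) (hb : ∀ l ∈ S, 0 ≤ b l)
    (hy : ∀ l, 0 ≤ y l) (i : Fin n) : 0 ≤ fderiv ℝ (polyRate S T a b N) y (Pi.single i 1) := by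
  have hu : ∀ l, 0 ≤ y l / T := fun l => div_nonneg (hy l) hT.le
  rw [fderiv_polyRate_single]
  split_ifs with hi
  · refine div_nonneg (add_nonneg ?_ ?_) hT.le
    · exact mul_nonneg (Finset.prod_nonneg fun l _ => hu l)
        (add_sum_mul_div_pow_nonneg hT ha hb hy)
    · exact mul_nonneg (Finset.prod_nonneg fun l _ => hu l)
        (mul_nonneg (hb i hi) (mul_nonneg N.cast_nonneg (pow_nonneg (hu i) _)))
  · exact le_rfl

lemma fderiv_polyRate_single_pos (hT : 0 < T) (ha : 0 < a) (hb : ∀ l ∈ S, 0 ≤ b l)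
    (hy : ∀ l, 0 < y l) {i : Fin n} (hi : i ∈ S) :
    0 < fderiv ℝ (polyRate S T a b N) y (Pi.single i 1) := by
  have hu : ∀ l, 0 < y l / T := fun l => div_pos (hy l) hT
  rw [fderiv_polyRate_single, if_pos hi]
  refine div_pos (add_pos_of_pos_of_nonneg ?_ ?_) hT
  · exact mul_pos (Finset.prod_pos fun l _ => hu l) <| add_pos_of_pos_of_nonneg ha <|
      Finset.sum_nonneg fun l hl => mul_nonneg (hb l hl) (pow_nonneg (hu l).le N)
  · exact mul_nonneg (Finset.prod_nonneg fun l _ => (hu l).le)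
      (mul_nonneg (hb i hi) (mul_nonneg N.cast_nonneg (pow_nonneg (hu i).le _)))

lemma polyRate_diag (hT : T ≠ 0) : polyRate S T a b N (fun _ => T) = a + ∑ l ∈ S, b l := by
  simp [polyRate, div_self hT]

lemma fderiv_polyRate_single_diag (hT : T ≠ 0) {i : Fin n} (hi : i ∈ S) :
    fderiv ℝ (polyRate S T a b N) (fun _ => T) (Pi.single i 1) =
      (a + ∑ l ∈ S, b l + N * b i) / T := by
  rw [fderiv_polyRate_single, if_pos hi]
  simp only [div_self hT, one_pow, mul_one, Finset.prod_const_one, one_mul]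
  ring

end PolyRate

section PolynomialKinetics

variable {n ν : ℕ} {A : Matrix (Fin n) (Fin ν) ℕ}

def reactants (A : Matrix (Fin n) (Fin ν) ℕ) (j : Fin ν) : Finset (Fin n) :=
  Finset.univ.filter fun i => 0 < A i j

lemma mem_reactants {i : Fin n} {j : Fin ν} : i ∈ reactants A j ↔ 0 < A i j := by
  simp [reactants]

lemma isAdmissible_polyRate {T : ℝ} {a : Fin ν → ℝ} {b : Fin ν → Fin n → ℝ} {N : ℕ}
    (hT : 0 < T) (ha : ∀ j, 0 < a j) (hb : ∀ j, ∀ i ∈ reactants A j, 0 ≤ b j i) :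
    IsAdmissible A fun y j => polyRate (reactants A j) T (a j) (b j) N y where
  smooth := contDiff_pi.2 fun j => contDiff_polyRate _ _ _ _ _
  nonneg _ hx j := polyRate_nonneg hT (ha j).le (hb j) hx
  vanish _ _ _ _ hA hxi := polyRate_eq_zero (mem_reactants.2 hA) hxi
  deriv_nonneg _ hx i j _ := fderiv_polyRate_single_nonneg hT (ha j).le (hb j) hx i
  deriv_zero _ _ i j hA := by
    rw [pd, fderiv_polyRate_single, if_neg (mt mem_reactants.1 (by omega))]
  deriv_pos _ hx _ j hA := fderiv_polyRate_single_pos hT (ha j) (hb j) hx (mem_reactants.2 hA)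

lemma exists_isAdmissible_eq_jac_eq {w : Fin ν → ℝ} (hw : ∀ j, 0 < w j)
    {Q : Matrix (Fin ν) (Fin n) ℝ} (hQ : HasStrictReactantSignPattern A Q) :
    ∃ R x₀, IsAdmissible A R ∧ (∀ i, 0 < x₀ i) ∧ R x₀ = w ∧ jac R x₀ = Q := by
  -- At `x₀ = (T, …, T)` the `i`-th partial derivative of `polyRate` is `(w + N b i) / T`:
  -- a large `T` makes the required `b = (T Q - w) / N` nonnegative, and then a large `N`
  -- keeps the constant term `a = w - ∑ b` positive.
  have hTQ : ∀ i j, ∀ᶠ T : ℝ in atTop, 0 < A i j → w j ≤ T * Q j i := fun i j => by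
    by_cases hA : 0 < A i j
    · exact ((tendsto_id.atTop_mul_const ((hQ i j).1 hA)).eventually_ge_atTop (w j)).mono
        fun _ hT _ => hT
    · exact .of_forall fun _ hA' => absurd hA' hA
  obtain ⟨T, hT, hTQ⟩ := ((eventually_gt_atTop 0).and
    (eventually_all.2 fun i => eventually_all.2 (hTQ i))).exists
  obtain ⟨N, hN, hNw⟩ := ((eventually_gt_atTop 0).and (eventually_all.2 fun j =>
    (tendsto_natCast_atTop_atTop.atTop_mul_const (hw j)).eventually_gt_atTop
      (∑ i ∈ reactants A j, (T * Q j i - w j)))).exists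
  have hNℝ : (0 : ℝ) < N := Nat.cast_pos.2 hN
  set b : Fin ν → Fin n → ℝ := fun j i => (T * Q j i - w j) / N
  set a : Fin ν → ℝ := fun j => w j - ∑ i ∈ reactants A j, b j i
  have hb : ∀ j, ∀ i ∈ reactants A j, 0 ≤ b j i := fun j i hi =>
    div_nonneg (sub_nonneg.2 (hTQ i j (mem_reactants.1 hi))) hNℝ.le
  have ha : ∀ j, 0 < a j := fun j => by
    simp only [a, b, ← Finset.sum_div, sub_pos, div_lt_iff₀ hNℝ]
    linarith [hNw j]
  refine ⟨_, fun _ => T, isAdmissible_polyRate (N := N) hT ha hb, fun _ => hT, ?_, ?_⟩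
  · ext j
    simp only [polyRate_diag hT.ne', a, sub_add_cancel]
  · refine Matrix.ext fun j i => ?_
    change fderiv ℝ (polyRate (reactants A j) T (a j) (b j) N) _ _ = Q j i
    by_cases hA : 0 < A i j
    · rw [fderiv_polyRate_single_diag hT.ne' (mem_reactants.2 hA)]
      simp only [a, b, sub_add_cancel]
      field_simp
      ring
    · rw [fderiv_polyRate_single, if_neg (mt mem_reactants.1 hA), (hQ i j).2 (by omega)]

end PolynomialKinetics

lemma exists_pos_mulVec_eq {n ν : ℕ} {Γ : Matrix (Fin n) (Fin ν) ℝ}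
    (hAG : ∃ v : Fin ν → ℝ, (∀ j, 0 < v j) ∧ Γ *ᵥ v = 0) (r : Fin ν → ℝ) :
    ∃ w : Fin ν → ℝ, (∀ j, 0 < w j) ∧ Γ *ᵥ w = Γ *ᵥ r := by
  obtain ⟨v, hv, hΓv⟩ := hAG
  obtain ⟨t, ht⟩ := (eventually_all.2 fun j => tendsto_atTop_add_const_left _ (r j)
    (tendsto_id.atTop_mul_const (hv j)) |>.eventually_gt_atTop 0).exists
  exact ⟨r + t • v, ht, by rw [mulVec_add, mulVec_smul, hΓv, smul_zero, add_zero]⟩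

section Linearized

variable {n ν q : ℕ} {A : Matrix (Fin n) (Fin ν) ℕ} {Γ : Matrix (Fin n) (Fin ν) ℝ}
  {Bm : Matrix (Fin q) (Fin n) ℝ} {R : (Fin n → ℝ) → Fin ν → ℝ}

/-- `‖C r‖_∞` does not increase to first order along `ṙ = P Γ r` for any Jacobian sign
pattern `P`. Both Lyapunov conditions of the theorem turn out to be equivalent to it. -/
def SupNormNonincreasingLinearized (A : Matrix (Fin n) (Fin ν) ℕ) (Γ : Matrix (Fin n) (Fin ν) ℝ)
    (C : Matrix (Fin q) (Fin ν) ℝ) : Prop :=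
  ∀ r P, HasReactantSignPattern A P → ∀ k σ, IsNormingCoord (C *ᵥ r) k σ →
    σ * (C *ᵥ (P *ᵥ (Γ *ᵥ r))) k ≤ 0

lemma SupNormNonincreasingLinearized.of_strict {C : Matrix (Fin q) (Fin ν) ℝ}
    (h : ∀ r Q, HasStrictReactantSignPattern A Q → ∀ k σ, IsNormingCoord (C *ᵥ r) k σ →
      σ * (C *ᵥ (Q *ᵥ (Γ *ᵥ r))) k ≤ 0) :
    SupNormNonincreasingLinearized A Γ C := by
  intro r P hP k σ hk
  have hlim : Tendsto (fun ε : ℝ => σ * (C *ᵥ ((P + ε • reactantIndicator A) *ᵥ (Γ *ᵥ r))) k)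
      (𝓝[>] 0) (𝓝 (σ * (C *ᵥ (P *ᵥ (Γ *ᵥ r))) k)) := by
    refine (Continuous.tendsto' ?_ 0 _ (by simp)).mono_left nhdsWithin_le_nhds
    simp only [add_mulVec, smul_mulVec, mulVec_add, mulVec_smul, Pi.add_apply, Pi.smul_apply,
      smul_eq_mul]
    fun_prop
  exact le_of_tendsto hlim <| eventually_nhdsWithin_of_forall fun ε hε =>
    h r _ (hP.add_smul_reactantIndicator hε) k σ hk

lemma SupNormNonincreasingLinearized.dini_norm_rate_nonpos
    (hC : SupNormNonincreasingLinearized A Γ (Bm * Γ)) (hR : IsAdmissible A R)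
    {x : Fin n → ℝ} (hx : ∀ i, 0 ≤ x i) :
    dini (fun y => ‖(Bm * Γ) *ᵥ R y‖) (fun y => Γ *ᵥ R y) x ≤ 0 :=
  dini_norm_nonpos
    (hasDerivAt_mulVec_comp_add_smul _ (hR.smooth.differentiable one_ne_zero) x _)
    fun k σ hk => hC (R x) (jac R x) (hR.hasReactantSignPattern_rows fun _ => hx) k σ hk

lemma SupNormNonincreasingLinearized.dini_norm_dual_nonpos
    (hC : SupNormNonincreasingLinearized A Γ (Bm * Γ)) (hR : IsAdmissible A R)
    {xe x : Fin n → ℝ} (hxe : ∀ i, 0 ≤ xe i) (heq : Γ *ᵥ R xe = 0) (hx : ∀ i, 0 ≤ x i)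
    {r : Fin ν → ℝ} (hr : Γ *ᵥ r = x - xe) :
    dini (fun y => ‖Bm *ᵥ (y - xe)‖) (fun y => Γ *ᵥ R y) x ≤ 0 := by
  obtain ⟨z, hz, hRz⟩ :=
    exists_sub_eq_mulVec_of_segment (hR.smooth.differentiable one_ne_zero) xe x
  have hz0 : ∀ j, 0 ≤ z j := fun j =>
    (convex_Ici 0).segment_subset (Set.mem_Ici.2 hxe) (Set.mem_Ici.2 hx) (hz j)
  refine dini_norm_nonpos (hasDerivAt_mulVec_add_smul_sub Bm x _ xe) fun k σ hk => ?_
  have hd : Bm *ᵥ (Γ *ᵥ R x) = (Bm * Γ) *ᵥ ((Matrix.of fun j => jac R (z j) j) *ᵥ (Γ *ᵥ r)) := by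
    rw [hr, ← hRz, ← mulVec_mulVec, mulVec_sub, heq, sub_zero]
  rw [hd]
  exact hC r _ (hR.hasReactantSignPattern_rows hz0) k σ (by rwa [← mulVec_mulVec, hr])

lemma supNormNonincreasingLinearized_of_dini_norm_rate_nonpos
    (hAG : ∃ v : Fin ν → ℝ, (∀ j, 0 < v j) ∧ Γ *ᵥ v = 0)
    (h1 : ∀ R, IsAdmissible A R → ∀ x : Fin n → ℝ, (∀ i, 0 ≤ x i) →
      dini (fun y => ‖(Bm * Γ) *ᵥ R y‖) (fun y => Γ *ᵥ R y) x ≤ 0) :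
    SupNormNonincreasingLinearized A Γ (Bm * Γ) := by
  refine .of_strict fun r Q hQ k σ hk => ?_
  obtain ⟨w, hw, hΓw⟩ := exists_pos_mulVec_eq hAG r
  obtain ⟨R, x₀, hR, hx₀, hRx₀, hjac⟩ := exists_isAdmissible_eq_jac_eq hw hQ
  have hCR : (Bm * Γ) *ᵥ R x₀ = (Bm * Γ) *ᵥ r := by
    rw [hRx₀, ← mulVec_mulVec, hΓw, mulVec_mulVec]
  calc σ * ((Bm * Γ) *ᵥ (Q *ᵥ (Γ *ᵥ r))) k
      = σ * ((Bm * Γ) *ᵥ (jac R x₀ *ᵥ (Γ *ᵥ R x₀))) k := by rw [hjac, hRx₀, hΓw]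
    _ ≤ dini (fun y => ‖(Bm * Γ) *ᵥ R y‖) (fun y => Γ *ᵥ R y) x₀ :=
      le_dini_norm (hasDerivAt_mulVec_comp_add_smul _ (hR.smooth.differentiable one_ne_zero) _ _)
        (hCR ▸ hk)
    _ ≤ 0 := h1 R hR x₀ fun i => (hx₀ i).le

/-- Take a kinetics with an equilibrium `x₀` where the Jacobian is `Q`. Along `s ↦ x₀ + s Γ r`
the dual condition forces `σ (C R)_k ≤ 0`; this vanishes at `s = 0`, so its derivative there,
`σ (C Q Γ r)_k`, is `≤ 0`. -/
lemma supNormNonincreasingLinearized_of_dini_norm_dual_nonpos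
    (hAG : ∃ v : Fin ν → ℝ, (∀ j, 0 < v j) ∧ Γ *ᵥ v = 0)
    (h2 : ∀ R, IsAdmissible A R →
      ∀ xe : Fin n → ℝ, (∀ i, 0 ≤ xe i) → Γ *ᵥ R xe = 0 →
        ∀ x : Fin n → ℝ, (∀ i, 0 ≤ x i) → (∃ r : Fin ν → ℝ, Γ *ᵥ r = x - xe) →
          dini (fun y => ‖Bm *ᵥ (y - xe)‖) (fun y => Γ *ᵥ R y) x ≤ 0) :
    SupNormNonincreasingLinearized A Γ (Bm * Γ) := by
  obtain ⟨v, hv, hΓv⟩ := hAG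
  refine .of_strict fun r Q hQ k σ hk => ?_
  obtain ⟨R, x₀, hR, hx₀, hRx₀, hjac⟩ := exists_isAdmissible_eq_jac_eq hv hQ
  have heq : Γ *ᵥ R x₀ = 0 := hRx₀ ▸ hΓv
  set φ : ℝ → ℝ := fun s => σ * ((Bm * Γ) *ᵥ R (x₀ + s • (Γ *ᵥ r))) k
  have hφ : HasDerivAt φ (σ * ((Bm * Γ) *ᵥ (Q *ᵥ (Γ *ᵥ r))) k) 0 := by
    have := hasDerivAt_pi.1 (hasDerivAt_mulVec_comp_add_smul (Bm * Γ)
      (hR.smooth.differentiable one_ne_zero) x₀ (Γ *ᵥ r)) k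
    rw [hjac] at this
    exact this.const_mul σ
  have hφ0 : φ 0 = 0 := by simp [φ, ← mulVec_mulVec, heq]
  have hpos : ∀ᶠ s : ℝ in 𝓝[>] 0, ∀ i, 0 ≤ (x₀ + s • (Γ *ᵥ r)) i := by
    refine eventually_all.2 fun i => ?_
    have : Tendsto (fun s : ℝ => (x₀ + s • (Γ *ᵥ r)) i) (𝓝[>] 0) (𝓝 (x₀ i)) :=
      (Continuous.tendsto' (by fun_prop) 0 _ (by simp)).mono_left nhdsWithin_le_nhds
    exact (this.eventually_const_lt (hx₀ i)).mono fun _ => le_of_lt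
  refine hφ.nonpos_of_eventually_le ?_
  filter_upwards [hpos, self_mem_nhdsWithin] with s hs (hs0 : 0 < s)
  have hG : Bm *ᵥ (x₀ + s • (Γ *ᵥ r) - x₀) = s • ((Bm * Γ) *ᵥ r) := by
    rw [add_sub_cancel_left, mulVec_smul, mulVec_mulVec]
  calc φ s = σ * (Bm *ᵥ (Γ *ᵥ R (x₀ + s • (Γ *ᵥ r)))) k := by simp only [φ, mulVec_mulVec]
    _ ≤ dini (fun y => ‖Bm *ᵥ (y - x₀)‖) (fun y => Γ *ᵥ R y) (x₀ + s • (Γ *ᵥ r)) :=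
      le_dini_norm (hasDerivAt_mulVec_add_smul_sub Bm _ _ x₀) (hG ▸ hk.smul hs0)
    _ ≤ 0 := h2 R hR x₀ (fun i => (hx₀ i).le) heq _ hs
      ⟨s • r, by rw [mulVec_smul, add_sub_cancel_left]⟩
    _ = φ 0 := hφ0.symm

end Linearized

theorem stmt7_general {n ν q : ℕ} (A : Matrix (Fin n) (Fin ν) ℕ)
    (Γ : Matrix (Fin n) (Fin ν) ℝ)
    (Bm : Matrix (Fin q) (Fin n) ℝ)
    (hAG : ∃ v : Fin ν → ℝ, (∀ j, 0 < v j) ∧ Γ.mulVec v = 0) :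
    (∀ R, IsAdmissible A R → ∀ x : Fin n → ℝ, (∀ i, 0 ≤ x i) →
        dini (fun y => ‖(Bm * Γ).mulVec (R y)‖) (fun y => Γ.mulVec (R y)) x ≤ 0)
    ↔ (∀ R, IsAdmissible A R →
        ∀ xe : Fin n → ℝ, (∀ i, 0 ≤ xe i) → Γ.mulVec (R xe) = 0 →
          ∀ x : Fin n → ℝ, (∀ i, 0 ≤ x i) → (∃ r : Fin ν → ℝ, Γ.mulVec r = x - xe) →
            dini (fun y => ‖Bm.mulVec (y - xe)‖) (fun y => Γ.mulVec (R y)) x ≤ 0) := by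
  constructor
  · intro h1 R hR xe hxe heq x hx ⟨r, hr⟩
    exact (supNormNonincreasingLinearized_of_dini_norm_rate_nonpos hAG h1).dini_norm_dual_nonpos
      hR hxe heq hx hr
  · intro h2 R hR x hx
    exact (supNormNonincreasingLinearized_of_dini_norm_dual_nonpos hAG h2).dini_norm_rate_nonpos
      hR hx

/-- Theorem 4.4 (convex case): with `C = BΓ` and `ker C = ker Γ`, the PWLR Lyapunov
function `‖C R(x)‖_∞` is nonincreasing for all admissible kinetics iff the dual PWL
function `‖B(x − x_e)‖_∞` is nonincreasing on every stoichiometric class. -/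
theorem stmt7 {n ν q : ℕ} (A B : Matrix (Fin n) (Fin ν) ℕ)
    (Γ : Matrix (Fin n) (Fin ν) ℝ)
    (hΓ : ∀ i j, Γ i j = (B i j : ℝ) - (A i j : ℝ))
    (Bm : Matrix (Fin q) (Fin n) ℝ)
    (hker : ∀ r : Fin ν → ℝ, (Bm * Γ).mulVec r = 0 ↔ Γ.mulVec r = 0)
    (hAG : ∃ v : Fin ν → ℝ, (∀ j, 0 < v j) ∧ Γ.mulVec v = 0) :
    (∀ R, IsAdmissible A R → ∀ x : Fin n → ℝ, (∀ i, 0 ≤ x i) →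
        dini (fun y => ‖(Bm * Γ).mulVec (R y)‖) (fun y => Γ.mulVec (R y)) x ≤ 0)
    ↔ (∀ R, IsAdmissible A R →
        ∀ xe : Fin n → ℝ, (∀ i, 0 ≤ xe i) → Γ.mulVec (R xe) = 0 →
          ∀ x : Fin n → ℝ, (∀ i, 0 ≤ x i) → (∃ r : Fin ν → ℝ, Γ.mulVec r = x - xe) →
            dini (fun y => ‖Bm.mulVec (y - xe)‖) (fun y => Γ.mulVec (R y)) x ≤ 0) :=
  stmt7_general A Γ Bm hAG
end

section
/- Let Γ ∈ ℝ^{n×ν} and A = [α_{ij}] ∈ ℤ≥0^{n×ν}. Call ρ ∈ ℝ^{ν×n} an admissible pattern if ρ_{ji} = 0 whenever α_{ij} = 0, and nonnegative if additionally ρ_{ji} ≥ 0 for all entries; let M(ρ) = −Γρ ∈ ℝ^{n×n}. Fix a subset I ⊆ {1,…,n} with |I| = k. The principal minor det(M(ρ)_{I,I}) is a homogeneous polynomial of degree k in the entries {ρ_{ji} : α_{ij} > 0}. If det(M(ρ)_{I,I}) ≥ 0 for every nonnegative admissible pattern ρ, then every coefficient of this polynomial is nonnegative; consequently, if the minor is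 positive at some admissible pattern ρ₀ with ρ₀_{ji} > 0 for all (i,j) with α_{ij} > 0, then it is positive at every admissible pattern with all supported entries strictly positive. -/
/-- Principal minor of `M` with rows and columns indexed by `I`. -/
noncomputable def pminor {n : ℕ} (M : Matrix (Fin n) (Fin n) ℝ) (I : Finset (Fin n)) : ℝ :=
  (M.submatrix (fun i : {x : Fin n // x ∈ I} => (i : Fin n))
    (fun i : {x : Fin n // x ∈ I} => (i : Fin n))).det

/-- The principal minor `det((−Γρ)_{I,I})` as a polynomial in the supported entries
`ρ_{ji}` (those with `α_{ij} > 0`). -/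
noncomputable def minorPoly {n ν : ℕ} (Γ : Matrix (Fin n) (Fin ν) ℝ)
    (A : Matrix (Fin n) (Fin ν) ℕ) (I : Finset (Fin n)) :
    MvPolynomial (Fin ν × Fin n) ℝ :=
  Matrix.det (Matrix.of fun i i' : {x : Fin n // x ∈ I} =>
    -∑ j : Fin ν, MvPolynomial.C (Γ (i : Fin n) j) *
      (if 0 < A (i' : Fin n) j then MvPolynomial.X (j, (i' : Fin n)) else 0))

/-
Cauchy–Binet expands the minor as
`det((-Γρ)_{I,I}) = ∑_{f : I → ν} det((-Γ)_{I,f}) · ∏_{i ∈ I} ρ_{f(i) i}`,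
so it is homogeneous of degree `|I|` and each of its coefficients is a sum of minors
`det((-Γ)_{I,f})` with `f` supported (`α_{i f(i)} > 0`). Evaluating at the 0/1 pattern on the
graph of such an `f` kills every other term, so these minors are nonnegative. Finally, a
polynomial with nonnegative coefficients that is positive at `x` is positive at every
nonnegative `y` that is positive wherever `x` is nonzero: a monomial responsible for the
positivity at `x` is positive at `y`.
-/

open Finset MvPolynomial

theorem Matrix.det_mul_eq_sum_prod_mul_det_submatrix {R m κ : Type*} [CommRing R]
    [Fintype m] [DecidableEq m] [Fintype κ] (G : Matrix m κ R) (Y : Matrix κ m R) :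
    (G * Y).det = ∑ p : m → κ, (∏ i, Y (p i) i) * (G.submatrix id p).det := by
  simp only [Matrix.det_apply', Matrix.mul_apply, prod_univ_sum, mul_sum,
    Fintype.piFinset_univ, Matrix.submatrix_apply, id]
  rw [sum_comm]
  refine sum_congr rfl fun p _ => sum_congr rfl fun σ _ => ?_
  rw [prod_mul_distrib]
  ring

theorem Matrix.det_submatrix_mul_eq_sum {R m n κ : Type*} [CommRing R] [Fintype m]
    [DecidableEq m] [Fintype κ] (G : Matrix n κ R) (Y : Matrix κ n R) (e : m → n) :
    ((G * Y).submatrix e e).det =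
      ∑ p : m → κ, (∏ i, Y (p i) (e i)) * (G.submatrix e p).det := by
  rw [Matrix.submatrix_mul _ _ _ id _ Function.bijective_id,
    Matrix.det_mul_eq_sum_prod_mul_det_submatrix]
  rfl

namespace MvPolynomial

variable {σ R : Type*} [CommSemiring R] [PartialOrder R]

theorem coeff_prod_nonneg [IsOrderedRing R] {ι : Type*} (s : Finset ι)
    (p : ι → MvPolynomial σ R) (hp : ∀ i ∈ s, ∀ m, 0 ≤ (p i).coeff m) (m : σ →₀ ℕ) :
    0 ≤ (∏ i ∈ s, p i).coeff m := by
  classical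
  revert m
  refine prod_induction p (fun q => ∀ m, 0 ≤ q.coeff m) (fun q r hq hr m => ?_) (fun m => ?_) hp
  · rw [coeff_mul]
    exact sum_nonneg fun x _ => mul_nonneg (hq _) (hr _)
  · rw [coeff_one]
    split_ifs <;> simp

theorem eval_pos_of_coeff_nonneg [IsStrictOrderedRing R] {p : MvPolynomial σ R}
    (hp : ∀ m, 0 ≤ p.coeff m) {x y : σ → R} (hx : 0 < eval x p) (hy : ∀ k, 0 ≤ y k)
    (hxy : ∀ k, x k ≠ 0 → 0 < y k) : 0 < eval y p := by
  rw [eval_eq] at hx ⊢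
  obtain ⟨d, hd, hterm⟩ := exists_ne_zero_of_sum_ne_zero hx.ne'
  have hcoeff : 0 < p.coeff d := (hp d).lt_of_ne' (left_ne_zero_of_mul hterm)
  have hvar : ∀ k ∈ d.support, 0 < y k ^ d k := fun k hk =>
    pow_pos (hxy k fun h0 => right_ne_zero_of_mul hterm
      (prod_eq_zero hk (by rw [h0, zero_pow (Finsupp.mem_support_iff.mp hk)]))) _
  exact sum_pos' (fun e _ => mul_nonneg (hp e) (prod_nonneg fun k _ => pow_nonneg (hy k) _))
    ⟨d, hd, mul_pos hcoeff (prod_pos hvar)⟩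

end MvPolynomial

section ReactionNetwork

variable {n ν : ℕ}

noncomputable def genericPattern (A : Matrix (Fin n) (Fin ν) ℕ) :
    Matrix (Fin ν) (Fin n) (MvPolynomial (Fin ν × Fin n) ℝ) :=
  Matrix.of fun j i => if 0 < A i j then X (j, i) else 0

noncomputable def graphPattern {I : Finset (Fin n)} (f : I → Fin ν) : Matrix (Fin ν) (Fin n) ℝ :=
  Matrix.of fun j i => if h : i ∈ I then if f ⟨i, h⟩ = j then 1 else 0 else 0

theorem pminor_mul_graphPattern (G : Matrix (Fin n) (Fin ν) ℝ) {I : Finset (Fin n)}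
    (f : I → Fin ν) : pminor (G * graphPattern f) I = (G.submatrix Subtype.val f).det := by
  rw [pminor, Matrix.det_submatrix_mul_eq_sum, sum_eq_single f]
  · simp [graphPattern]
  · intro g _ hg
    obtain ⟨i, hi⟩ := Function.ne_iff.mp hg
    rw [prod_eq_zero (mem_univ i) (by simp [graphPattern, Ne.symm hi]), zero_mul]
  · simp

theorem genericPattern_map_eval {A : Matrix (Fin n) (Fin ν) ℕ} {ρ : Matrix (Fin ν) (Fin n) ℝ}
    (hρ : ∀ i j, A i j = 0 → ρ j i = 0) :
    (genericPattern A).map (eval fun p => ρ p.1 p.2) = ρ := by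
  ext j i
  by_cases h : 0 < A i j
  · simp [genericPattern, h]
  · simp [genericPattern, h, hρ i j (Nat.eq_zero_of_not_pos h)]

variable (Γ : Matrix (Fin n) (Fin ν) ℝ) (A : Matrix (Fin n) (Fin ν) ℕ) (I : Finset (Fin n))

theorem minorPoly_eq_det :
    minorPoly Γ A I =
      (Matrix.submatrix ((-Γ).map (C (σ := Fin ν × Fin n)) * genericPattern A)
        (Subtype.val : I → Fin n) Subtype.val).det := by
  unfold minorPoly
  congr 1
  refine Matrix.ext fun i i' => ?_
  simp only [Matrix.of_apply, Matrix.submatrix_apply, Matrix.mul_apply, Matrix.map_apply,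
    genericPattern, ← sum_neg_distrib]
  refine sum_congr rfl fun j _ => ?_
  split_ifs <;> simp

theorem eval_minorPoly {ρ : Matrix (Fin ν) (Fin n) ℝ} (hρ : ∀ i j, A i j = 0 → ρ j i = 0) :
    eval (fun p => ρ p.1 p.2) (minorPoly Γ A I) = pminor (-(Γ * ρ)) I := by
  rw [minorPoly_eq_det, RingHom.map_det, RingHom.mapMatrix_apply, ← Matrix.submatrix_map,
    Matrix.map_mul, genericPattern_map_eval hρ, Matrix.map_map, pminor, ← Matrix.neg_mul]
  congr 3
  ext
  simp

theorem minorPoly_eq_sum :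
    minorPoly Γ A I =
      ∑ f : I → Fin ν,
        C ((-Γ).submatrix Subtype.val f).det * ∏ i : I, genericPattern A (f i) i := by
  rw [minorPoly_eq_det, Matrix.det_submatrix_mul_eq_sum]
  refine sum_congr rfl fun f _ => ?_
  rw [mul_comm, RingHom.map_det]
  rfl

theorem isHomogeneous_minorPoly : (minorPoly Γ A I).IsHomogeneous I.card := by
  rw [minorPoly_eq_sum]
  refine IsHomogeneous.sum _ _ _ fun f _ => IsHomogeneous.C_mul ?_ _
  have hentry : ∀ j i, (genericPattern A j i).IsHomogeneous 1 := fun j i => by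
    simp only [genericPattern, Matrix.of_apply]
    split_ifs
    exacts [isHomogeneous_X _ _, isHomogeneous_zero _ _ _]
  have := IsHomogeneous.prod univ (fun i : I => genericPattern A (f i) i) (fun _ => 1)
    fun i _ => hentry (f i) i
  rwa [sum_const, card_univ, Fintype.card_coe, smul_eq_mul, mul_one] at this

theorem det_neg_submatrix_nonneg
    (hyp : ∀ ρ : Matrix (Fin ν) (Fin n) ℝ,
      (∀ i j, A i j = 0 → ρ j i = 0) → (∀ j i, 0 ≤ ρ j i) → 0 ≤ pminor (-(Γ * ρ)) I)
    {f : I → Fin ν} (hf : ∀ i : I, 0 < A i (f i)) : 0 ≤ ((-Γ).submatrix Subtype.val f).det := by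
  rw [← pminor_mul_graphPattern, Matrix.neg_mul]
  refine hyp _ (fun i j hA => ?_) (fun j i => ?_)
  · simp only [graphPattern, Matrix.of_apply]
    split_ifs with hi hj
    · exact absurd hA (hj ▸ hf ⟨i, hi⟩).ne'
    all_goals rfl
  · simp only [graphPattern, Matrix.of_apply]
    split_ifs <;> simp

theorem coeff_minorPoly_nonneg
    (hyp : ∀ ρ : Matrix (Fin ν) (Fin n) ℝ,
      (∀ i j, A i j = 0 → ρ j i = 0) → (∀ j i, 0 ≤ ρ j i) → 0 ≤ pminor (-(Γ * ρ)) I)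
    (m : (Fin ν × Fin n) →₀ ℕ) : 0 ≤ (minorPoly Γ A I).coeff m := by
  rw [minorPoly_eq_sum, coeff_sum]
  refine sum_nonneg fun f _ => ?_
  rw [coeff_C_mul]
  by_cases hf : ∀ i : I, 0 < A i (f i)
  · refine mul_nonneg (det_neg_submatrix_nonneg Γ A I hyp hf) (coeff_prod_nonneg _ _ ?_ m)
    intro i _ m
    simp only [genericPattern, Matrix.of_apply, if_pos (hf i), coeff_X]
    split_ifs <;> simp
  · obtain ⟨i, hi⟩ := not_forall.mp hf
    rw [prod_eq_zero (mem_univ i) (by simp [genericPattern, hi]), coeff_zero, mul_zero]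

end ReactionNetwork

/-- Key claim in the proof of Theorem 5.1: the principal minor `det((−Γρ)_{I,I})` is a
homogeneous polynomial of degree `|I|` in the supported entries of `ρ`; if it is
nonnegative for every nonnegative admissible pattern, then all its coefficients are
nonnegative, and hence positivity at one strictly positive admissible pattern implies
positivity at all of them. -/
theorem stmt8 {n ν : ℕ} (Γ : Matrix (Fin n) (Fin ν) ℝ)
    (A : Matrix (Fin n) (Fin ν) ℕ) (I : Finset (Fin n)) :
    (∀ ρ : Matrix (Fin ν) (Fin n) ℝ, (∀ i j, A i j = 0 → ρ j i = 0) →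
        MvPolynomial.eval (fun p : Fin ν × Fin n => ρ p.1 p.2) (minorPoly Γ A I)
          = pminor (-(Γ * ρ)) I)
    ∧ (minorPoly Γ A I).IsHomogeneous I.card
    ∧ ((∀ ρ : Matrix (Fin ν) (Fin n) ℝ,
          (∀ i j, A i j = 0 → ρ j i = 0) → (∀ j i, 0 ≤ ρ j i) →
          0 ≤ pminor (-(Γ * ρ)) I) →
        (∀ m : (Fin ν × Fin n) →₀ ℕ, 0 ≤ (minorPoly Γ A I).coeff m) ∧
        (∀ ρ₀ : Matrix (Fin ν) (Fin n) ℝ,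
          (∀ i j, (0 < A i j → 0 < ρ₀ j i) ∧ (A i j = 0 → ρ₀ j i = 0)) →
          0 < pminor (-(Γ * ρ₀)) I →
          ∀ ρ : Matrix (Fin ν) (Fin n) ℝ,
            (∀ i j, (0 < A i j → 0 < ρ j i) ∧ (A i j = 0 → ρ j i = 0)) →
            0 < pminor (-(Γ * ρ)) I)) := by
  refine ⟨fun ρ hρ => eval_minorPoly Γ A I hρ, isHomogeneous_minorPoly Γ A I, fun hyp => ?_⟩
  have hcoeff := coeff_minorPoly_nonneg Γ A I hyp
  refine ⟨hcoeff, fun ρ₀ h₀ hpos ρ h => ?_⟩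
  rw [← eval_minorPoly Γ A I fun i j => (h₀ i j).2] at hpos
  rw [← eval_minorPoly Γ A I fun i j => (h i j).2]
  refine eval_pos_of_coeff_nonneg hcoeff hpos (fun ⟨j, i⟩ => ?_) (fun ⟨j, i⟩ hji => ?_)
  · rcases (A i j).eq_zero_or_pos with hA | hA
    exacts [((h i j).2 hA).ge, ((h i j).1 hA).le]
  · exact (h i j).1 (Nat.pos_of_ne_zero fun hA => hji ((h₀ i j).2 hA))
end

section
/- Consider a chemical reaction network with matrices A, B ∈ ℤ≥0^{n×ν}, Γ = B − A, which is conservative (there exists w ≫ 0 with wᵀΓ = 0), satisfies assumption AG (ker Γ contains a strictly positive vector), and has dim ker Γ = 1. Suppose the network has a critical siphon: a nonempty set P of species such that every input reaction of a species in P is an output reaction of some species in P, and P does not contain the support of any nonzero nonnegative λ ∈ ℝⁿ with λᵀΓ = 0. Then there exists no matrix C ∈ ℝ^{q×ν} with ker C = ker Γ such that for every admissible kinetics R ∈ K_A and every x ∈ ℝ≥0ⁿ, the upper Dini derivative of x ↦ ‖C R(x)‖_∞ along the vector field x ↦ ΓR(x) is nonpositive. -/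
/-!
Gordan's alternative turns the critical siphon `P` into a nonnegative rate direction `u`, supported
on output reactions of `P`, along which every species of `P` is produced: `(Γ u)_P ≫ 0`. Hence at
the rates `ρ = 1 + t u`, `t` large, every species of `P` is produced. Raising the kinetic order of
such a species in one of its output reactions `j` of a mass-action kinetics without bound, the
Dini condition at `x = 1` forces `φ (C e_j) ≤ 0` for a functional `φ` norming `C ρ`. So
`‖C (1 + t u)‖ ≤ ‖C 1‖` for large `t`, whereas `C u ≠ 0` makes it grow linearly in `t`.
-/

open Filter Set Topology

open Matrix

theorem nonpos_of_forall_nat_add_mul_le {α : Type*} [Field α] [LinearOrder α]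
    [IsStrictOrderedRing α] [Archimedean α] {a b c : α} (h : ∀ M : ℕ, a + M * b ≤ c) : b ≤ 0 := by
  by_contra! hb
  obtain ⟨M, hM⟩ := exists_nat_gt ((c - a) / b)
  have := h M
  rw [div_lt_iff₀ hb] at hM
  linarith

theorem StrongDual.apply_le_norm_of_norm_le_one {E : Type*} [NormedAddCommGroup E] [NormedSpace ℝ E]
    {φ : StrongDual ℝ E} (hφ : ‖φ‖ ≤ 1) (z : E) : φ z ≤ ‖z‖ :=
  (le_abs_self _).trans ((φ.le_of_opNorm_le hφ z).trans_eq (one_mul _))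

theorem StrongDual.apply_eq_sum {ι : Type*} [Fintype ι] [DecidableEq ι] (φ : StrongDual ℝ (ι → ℝ))
    (z : ι → ℝ) : φ z = ∑ i, z i * φ (Pi.single i 1) := by
  conv_lhs => rw [← Finset.univ_sum_single z, map_sum]
  refine Finset.sum_congr rfl fun i _ => ?_
  rw [← smul_eq_mul, ← map_smul, ← Pi.single_smul', smul_eq_mul, mul_one]

theorem StrongDual.apply_mulVec_eq_sum {q ν : ℕ} (φ : StrongDual ℝ (Fin q → ℝ))
    (C : Matrix (Fin q) (Fin ν) ℝ) (u : Fin ν → ℝ) :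
    φ (C *ᵥ u) = ∑ j, u j * φ (C.col j) := by
  conv_lhs => rw [← Finset.univ_sum_single u]
  simp only [mulVec_sum, map_sum, mulVec_single, op_smul_eq_smul, map_smul, smul_eq_mul]

theorem eq_zero_of_nonpos_of_dotProduct_eq_zero {ι : Type*} [Fintype ι] {w v : ι → ℝ} (hw : w ≤ 0)
    (hv : ∀ i, 0 < v i) (h : w ⬝ᵥ v = 0) : w = 0 := by
  have hterm := (Finset.sum_eq_zero_iff_of_nonpos fun i _ =>
    mul_nonpos_of_nonpos_of_nonneg (hw i) (hv i).le).1 h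
  ext i
  exact (mul_eq_zero.1 (hterm i (Finset.mem_univ i))).resolve_right (hv i).ne'

/-- Gordan's alternative, for the rows of `M` indexed by `P`. -/
theorem Matrix.exists_nonneg_mulVec_pos_or_exists_vecMul_nonpos {ι κ : Type*} [Fintype ι]
    [DecidableEq ι] [Fintype κ] [DecidableEq κ] (M : Matrix ι κ ℝ) (P : Finset ι) :
    (∃ u : κ → ℝ, 0 ≤ u ∧ ∀ i ∈ P, 0 < (M *ᵥ u) i) ∨
      ∃ lam : ι → ℝ, 0 ≤ lam ∧ lam ≠ 0 ∧ (∀ i, lam i ≠ 0 → i ∈ P) ∧ lam ᵥ* M ≤ 0 := by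
  by_cases h : ∃ u : κ → ℝ, 0 ≤ u ∧ ∀ i ∈ P, 0 < (M *ᵥ u) i
  · exact Or.inl h
  right
  set S : Set (ι → ℝ) := (P : Set ι).pi fun _ => Ioi 0
  have hST : Disjoint S (M.mulVecLin '' Ici 0) := by
    rw [Set.disjoint_left]
    rintro _ hS ⟨u, hu, rfl⟩
    exact h ⟨u, hu, hS⟩
  obtain ⟨f, c, hfS, hfT⟩ := geometric_hahn_banach_open (convex_pi fun _ _ => convex_Ioi 0)
    (isOpen_set_pi P.finite_toSet fun _ _ => isOpen_Ioi) ((convex_Ici 0).linear_image _) hST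
  have hS_one : (1 : ι → ℝ) ∈ S := fun _ _ => mem_Ioi.2 one_pos
  have hc : c ≤ 0 := by simpa using hfT 0 ⟨0, mem_Ici.2 le_rfl, by simp⟩
  -- `S` is stable under adding a vector nonnegative on `P`, and `M` maps the orthant to a cone.
  have hf_nonpos : ∀ z : ι → ℝ, (∀ i ∈ P, 0 ≤ z i) → f z ≤ 0 := fun z hz =>
    nonpos_of_forall_nat_add_mul_le (a := f 1) (c := c) fun N => by
      have hmem : 1 + (N : ℝ) • z ∈ S := fun i hi =>
        add_pos_of_pos_of_nonneg one_pos (mul_nonneg N.cast_nonneg (hz i hi))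
      simpa using (hfS _ hmem).le
  have hf_cone : ∀ u : κ → ℝ, 0 ≤ u → 0 ≤ f (M *ᵥ u) := fun u hu => by
    have := nonpos_of_forall_nat_add_mul_le (a := 0) (b := -f (M *ᵥ u)) (c := -c) fun N => by
      have := hfT _ ⟨(N : ℝ) • u, smul_nonneg N.cast_nonneg hu, rfl⟩
      simp only [mulVecLin_apply, map_smul, smul_eq_mul] at this
      linarith
    linarith
  have hsingle : ∀ i, (0 : ι → ℝ) ≤ Pi.single i 1 := fun _ => Pi.single_nonneg.2 zero_le_one
  have hf_single : ∀ i, f (Pi.single i 1) ≤ 0 := fun i => hf_nonpos _ fun i' _ => hsingle i i'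
  refine ⟨fun i => -f (Pi.single i 1), fun i => neg_nonneg.2 (hf_single i), fun h0 => ?_,
    fun i hi => ?_, fun j => ?_⟩
  · have hf1 : f 1 = 0 := by
      rw [f.apply_eq_sum]
      exact Finset.sum_eq_zero fun i _ => by simpa using congrFun h0 i
    linarith [hfS 1 hS_one]
  · by_contra hiP
    have := hf_nonpos (-Pi.single i 1) fun i' hi' => by
      simp [show i' ≠ i by rintro rfl; exact hiP hi']
    rw [map_neg] at this
    exact hi (by linarith [hf_single i])
  · have hcol := hf_cone (Pi.single j 1) (Pi.single_nonneg.2 zero_le_one)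
    rw [mulVec_single_one, f.apply_eq_sum] at hcol
    simp only [vecMul, dotProduct, Pi.zero_apply, neg_mul, Finset.sum_neg_distrib]
    simpa [mul_comm] using hcol

theorem exists_nonneg_mulVec_pos_of_critical_siphon {n ν : ℕ} {A B : Matrix (Fin n) (Fin ν) ℕ}
    {Γ : Matrix (Fin n) (Fin ν) ℝ} (hΓ : ∀ i j, Γ i j = (B i j : ℝ) - (A i j : ℝ))
    {v : Fin ν → ℝ} (hv : ∀ j, 0 < v j) (hΓv : Γ *ᵥ v = 0) {P : Finset (Fin n)}
    (hsiphon : ∀ j, (∃ i ∈ P, 0 < B i j) → ∃ i ∈ P, 0 < A i j)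
    (hcritical : ¬ ∃ lam : Fin n → ℝ, (∀ i, 0 ≤ lam i) ∧ lam ≠ 0 ∧
        (∀ i, lam i ≠ 0 → i ∈ P) ∧ lam ᵥ* Γ = 0) :
    ∃ u : Fin ν → ℝ, 0 ≤ u ∧ (∀ j, u j ≠ 0 → ∃ i ∈ P, 0 < A i j) ∧ ∀ i ∈ P, 0 < (Γ *ᵥ u) i := by
  classical
  have hΓ_zero : ∀ i ∈ P, ∀ j, (¬ ∃ i ∈ P, 0 < A i j) → Γ i j = 0 := by
    intro i hi j hj
    have hA : A i j = 0 := by by_contra h; exact hj ⟨i, hi, Nat.pos_of_ne_zero h⟩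
    have hB : B i j = 0 := by by_contra h; exact hj (hsiphon j ⟨i, hi, Nat.pos_of_ne_zero h⟩)
    simp [hΓ, hA, hB]
  rcases Γ.exists_nonneg_mulVec_pos_or_exists_vecMul_nonpos P with
    ⟨u, hu, hΓu⟩ | ⟨lam, hlam, hlam0, hlamP, hlamΓ⟩
  · -- The reactions that are not outputs of `P` do not act on the species of `P`.
    refine ⟨fun j => if ∃ i ∈ P, 0 < A i j then u j else 0, fun j => ?_, fun j hj => ?_,
      fun i hi => ?_⟩
    · dsimp only
      split_ifs
      exacts [hu j, le_rfl]
    · by_contra h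
      exact hj (if_neg h)
    · convert hΓu i hi using 1
      simp only [mulVec, dotProduct]
      refine Finset.sum_congr rfl fun j _ => ?_
      split_ifs with h
      · rfl
      · simp [hΓ_zero i hi j h]
  · refine (hcritical ⟨lam, hlam, hlam0, hlamP,
      eq_zero_of_nonpos_of_dotProduct_eq_zero hlamΓ hv ?_⟩).elim
    rw [← dotProduct_mulVec, hΓv, dotProduct_zero]

theorem le_limsup_of_tendsto_of_eventually_le {α : Type*} {l : Filter α} [l.NeBot]
    {a g b : α → ℝ} {A B : ℝ} (ha : Tendsto a l (𝓝 A)) (hb : Tendsto b l (𝓝 B))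
    (hag : a ≤ᶠ[l] g) (hgb : g ≤ᶠ[l] b) : A ≤ limsup g l :=
  ha.limsup_eq ▸ limsup_le_limsup hag ha.isCoboundedUnder_le (hb.isBoundedUnder_le.mono_le hgb)

theorem le_dini_norm_s15 {m : ℕ} {E : Type*} [NormedAddCommGroup E] [NormedSpace ℝ E]
    {G : (Fin m → ℝ) → E} {f : (Fin m → ℝ) → Fin m → ℝ} {x : Fin m → ℝ} {D : E}
    (hG : HasDerivAt (fun h : ℝ => G (x + h • f x)) D 0) {φ : StrongDual ℝ E} (hφ : ‖φ‖ ≤ 1)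
    (hφx : φ (G x) = ‖G x‖) : φ D ≤ dini (fun y => ‖G y‖) f x := by
  set γ : ℝ → E := fun h => G (x + h • f x)
  have hγ0 : γ 0 = G x := by simp [γ]
  have hslope : Tendsto (slope γ 0) (𝓝[>] 0) (𝓝 D) :=
    (hasDerivWithinAt_iff_tendsto_slope' (lt_irrefl 0)).1 hG.hasDerivWithinAt
  refine le_limsup_of_tendsto_of_eventually_le ((φ.continuous.tendsto D).comp hslope)
    ((continuous_norm.tendsto D).comp hslope) ?_ ?_
  all_goals
    filter_upwards [self_mem_nhdsWithin] with h (hh : 0 < h)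
    simp only [Function.comp_apply, slope_def_module, sub_zero, map_smul, smul_eq_mul, map_sub,
      norm_smul, norm_inv, Real.norm_of_nonneg hh.le, div_eq_inv_mul]
    refine mul_le_mul_of_nonneg_left ?_ (inv_nonneg.2 hh.le)
  · rw [hγ0, hφx]; exact sub_le_sub_right (StrongDual.apply_le_norm_of_norm_le_one hφ (γ h)) _
  · rw [← hγ0]; exact norm_sub_norm_le _ _

theorem hasFDerivAt_prod_pow {ι : Type*} [Fintype ι] [DecidableEq ι] (e : ι → ℕ) (x : ι → ℝ) :
    HasFDerivAt (fun y : ι → ℝ => ∏ i, y i ^ e i)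
      (∑ i, (∏ i' ∈ Finset.univ.erase i, x i' ^ e i') •
        ((e i * x i ^ (e i - 1)) • ContinuousLinearMap.proj (R := ℝ) (φ := fun _ : ι => ℝ) i)) x :=
  HasFDerivAt.finsetProd fun i _ =>
    (hasDerivAt_pow (e i) (x i)).comp_hasFDerivAt x (hasFDerivAt_apply i x)

section MassAction

variable {n ν : ℕ}

def massAction (ρ : Fin ν → ℝ) (E : Matrix (Fin n) (Fin ν) ℕ) (x : Fin n → ℝ) : Fin ν → ℝ :=
  fun j => ρ j * ∏ i, x i ^ E i j

theorem massAction_one (ρ : Fin ν → ℝ) (E : Matrix (Fin n) (Fin ν) ℕ) : massAction ρ E 1 = ρ := by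
  ext j; simp [massAction]

theorem hasFDerivAt_massAction_apply (ρ : Fin ν → ℝ) (E : Matrix (Fin n) (Fin ν) ℕ)
    (x : Fin n → ℝ) (j : Fin ν) :
    HasFDerivAt (fun y => massAction ρ E y j)
      (ρ j • ∑ i, (∏ i' ∈ Finset.univ.erase i, x i' ^ E i' j) •
        ((E i j * x i ^ (E i j - 1)) •
          ContinuousLinearMap.proj (R := ℝ) (φ := fun _ : Fin n => ℝ) i)) x :=
  (hasFDerivAt_prod_pow (fun i => E i j) x).const_mul (ρ j)

theorem pd_massAction (ρ : Fin ν → ℝ) (E : Matrix (Fin n) (Fin ν) ℕ) (x : Fin n → ℝ)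
    (j : Fin ν) (i : Fin n) :
    pd (massAction ρ E) x j i
      = ρ j * ((∏ i' ∈ Finset.univ.erase i, x i' ^ E i' j) * (E i j * x i ^ (E i j - 1))) := by
  rw [pd, (hasFDerivAt_massAction_apply ρ E x j).fderiv]
  simp [Pi.single_apply]

theorem isAdmissible_massAction {A : Matrix (Fin n) (Fin ν) ℕ} {ρ : Fin ν → ℝ}
    {E : Matrix (Fin n) (Fin ν) ℕ} (hρ : ∀ j, 0 < ρ j) (hE : ∀ i j, 0 < E i j ↔ 0 < A i j) :
    IsAdmissible A (massAction ρ E) where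
  smooth := contDiff_pi.2 fun j => contDiff_const.mul <| contDiff_prod fun i _ =>
    (ContinuousLinearMap.proj (R := ℝ) (φ := fun _ : Fin n => ℝ) i).contDiff.pow _
  nonneg x hx j := mul_nonneg (hρ j).le (Finset.prod_nonneg fun i _ => pow_nonneg (hx i) _)
  vanish x _ i j hA hxi :=
    mul_eq_zero_of_right _ <| Finset.prod_eq_zero (Finset.mem_univ i) <| by
      rw [hxi, zero_pow ((hE i j).2 hA).ne']
  deriv_nonneg x hx i j _ := by
    rw [pd_massAction]
    exact mul_nonneg (hρ j).le <|
      mul_nonneg (Finset.prod_nonneg fun i' _ => pow_nonneg (hx i') _) <|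
        mul_nonneg (Nat.cast_nonneg _) (pow_nonneg (hx i) _)
  deriv_zero x _ i j hA := by
    rw [pd_massAction, Nat.eq_zero_of_not_pos fun h => ((hE i j).1 h).ne' hA]
    simp
  deriv_pos x hx i j hA := by
    rw [pd_massAction]
    exact mul_pos (hρ j) <|
      mul_pos (Finset.prod_pos fun i' _ => pow_pos (hx i') _) <|
        mul_pos (Nat.cast_pos.2 ((hE i j).2 hA)) (pow_pos (hx i) _)

theorem hasDerivAt_massAction_one_add_smul (ρ : Fin ν → ℝ) (E : Matrix (Fin n) (Fin ν) ℕ)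
    (d : Fin n → ℝ) :
    HasDerivAt (fun h : ℝ => massAction ρ E (1 + h • d)) (fun j => ρ j * ∑ i, E i j * d i) 0 := by
  have hline : HasDerivAt (fun h : ℝ => (1 : Fin n → ℝ) + h • d) d 0 := by
    simpa using ((hasDerivAt_id (0 : ℝ)).smul_const d).const_add 1
  refine hasDerivAt_pi.2 fun j => ?_
  exact ((hasFDerivAt_massAction_apply ρ E 1 j).comp_hasDerivAt_of_eq 0 hline (by simp)).congr_deriv
    (by simp)

end MassAction

section RobustLyapunov

variable {n ν q : ℕ} {A : Matrix (Fin n) (Fin ν) ℕ} {Γ : Matrix (Fin n) (Fin ν) ℝ}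
  {C : Matrix (Fin q) (Fin ν) ℝ}

def IsRobustLyapunovNorm (A : Matrix (Fin n) (Fin ν) ℕ) (Γ : Matrix (Fin n) (Fin ν) ℝ)
    (C : Matrix (Fin q) (Fin ν) ℝ) : Prop :=
  ∀ R, IsAdmissible A R → ∀ x : Fin n → ℝ, (∀ i, 0 ≤ x i) →
    dini (fun y => ‖C *ᵥ R y‖) (fun y => Γ *ᵥ R y) x ≤ 0

theorem IsRobustLyapunovNorm.apply_col_nonpos (hC : IsRobustLyapunovNorm A Γ C)
    {ρ : Fin ν → ℝ} (hρ : ∀ j, 0 < ρ j) {φ : StrongDual ℝ (Fin q → ℝ)} (hφ : ‖φ‖ ≤ 1)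
    (hφρ : φ (C *ᵥ ρ) = ‖C *ᵥ ρ‖) {i₀ : Fin n} {j₀ : Fin ν} (hA : 0 < A i₀ j₀)
    (hd : 0 < (Γ *ᵥ ρ) i₀) : φ (C.col j₀) ≤ 0 := by
  set d := Γ *ᵥ ρ
  -- Mass-action kinetics whose order in `i₀` of reaction `j₀` is raised by `M`: at `x = 1` the
  -- rates are `ρ`, and the derivative of the rates along `Γ ρ` grows linearly in `M`.
  let E : ℕ → Matrix (Fin n) (Fin ν) ℕ := fun M i j =>
    (if 0 < A i j then 1 else 0) + if i = i₀ ∧ j = j₀ then M else 0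
  have hE : ∀ M i j, 0 < E M i j ↔ 0 < A i j := by
    intro M i j
    by_cases h : 0 < A i j
    · simp [E, h]
    · simp only [E, h, if_false, zero_add]
      split_ifs with hij
      · exact absurd (hij.1 ▸ hij.2 ▸ hA) h
      · simp
  let D : ℕ → Fin ν → ℝ := fun M j => ρ j * ∑ i, (E M i j : ℝ) * d i
  have hD : ∀ M : ℕ, D M = D 0 + (M * (ρ j₀ * d i₀)) • Pi.single j₀ 1 := by
    intro M
    ext j
    by_cases hj : j = j₀
    · subst hj
      simp [D, E, add_mul, mul_add, Finset.sum_add_distrib, mul_left_comm]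
    · simp [D, E, hj]
  have hDM : ∀ M : ℕ, φ (C *ᵥ D M) ≤ 0 := by
    intro M
    refine (le_dini_norm_s15 ?_ hφ ?_).trans
      (hC _ (isAdmissible_massAction hρ (hE M)) 1 fun _ => zero_le_one)
    · rw [massAction_one]
      exact (C.mulVecLin.toContinuousLinearMap.hasFDerivAt).comp_hasDerivAt 0
        (hasDerivAt_massAction_one_add_smul ρ (E M) d)
    · rwa [massAction_one]
  have hslope : ρ j₀ * d i₀ * φ (C.col j₀) ≤ 0 := by
    refine nonpos_of_forall_nat_add_mul_le (a := φ (C *ᵥ D 0)) (c := 0) fun M => ?_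
    have := hDM M
    rwa [hD, mulVec_add, mulVec_smul, mulVec_single_one, map_add, map_smul, smul_eq_mul,
      mul_assoc] at this
  exact nonpos_of_mul_nonpos_right hslope (mul_pos (hρ j₀) hd)

theorem IsRobustLyapunovNorm.apply_mulVec_nonpos (hC : IsRobustLyapunovNorm A Γ C)
    {ρ : Fin ν → ℝ} (hρ : ∀ j, 0 < ρ j) {φ : StrongDual ℝ (Fin q → ℝ)} (hφ : ‖φ‖ ≤ 1)
    (hφρ : φ (C *ᵥ ρ) = ‖C *ᵥ ρ‖) {u : Fin ν → ℝ} (hu : 0 ≤ u)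
    (hu_out : ∀ j, u j ≠ 0 → ∃ i, 0 < A i j ∧ 0 < (Γ *ᵥ ρ) i) : φ (C *ᵥ u) ≤ 0 := by
  rw [φ.apply_mulVec_eq_sum]
  refine Finset.sum_nonpos fun j _ => ?_
  rcases eq_or_ne (u j) 0 with h | h
  · simp [h]
  · obtain ⟨i, hA, hd⟩ := hu_out j h
    exact mul_nonpos_of_nonneg_of_nonpos (hu j) (hC.apply_col_nonpos hρ hφ hφρ hA hd)

theorem IsRobustLyapunovNorm.norm_mulVec_add_smul_le (hC : IsRobustLyapunovNorm A Γ C)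
    {ρ u : Fin ν → ℝ} (hρ : ∀ j, 0 < ρ j) (hu : 0 ≤ u) {t : ℝ} (ht : 0 ≤ t)
    (hu_out : ∀ j, u j ≠ 0 → ∃ i, 0 < A i j ∧ 0 < (Γ *ᵥ (ρ + t • u)) i) :
    ‖C *ᵥ (ρ + t • u)‖ ≤ ‖C *ᵥ ρ‖ := by
  obtain ⟨φ, hφ, hφρ⟩ := exists_dual_vector'' ℝ (C *ᵥ (ρ + t • u))
  rw [RCLike.ofReal_real_eq_id, id] at hφρ
  have hpos : ∀ j, 0 < (ρ + t • u) j := fun j =>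
    add_pos_of_pos_of_nonneg (hρ j) (mul_nonneg ht (hu j))
  have hφu := hC.apply_mulVec_nonpos hpos hφ hφρ hu hu_out
  calc ‖C *ᵥ (ρ + t • u)‖ = φ (C *ᵥ ρ) + t * φ (C *ᵥ u) := by
        rw [← hφρ, mulVec_add, mulVec_smul, map_add, map_smul, smul_eq_mul]
    _ ≤ φ (C *ᵥ ρ) := add_le_of_nonpos_right (mul_nonpos_of_nonneg_of_nonpos ht hφu)
    _ ≤ ‖C *ᵥ ρ‖ := StrongDual.apply_le_norm_of_norm_le_one hφ _

end RobustLyapunov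

theorem stmt15_general {n ν : ℕ} (A B : Matrix (Fin n) (Fin ν) ℕ)
    (Γ : Matrix (Fin n) (Fin ν) ℝ)
    (hΓ : ∀ i j, Γ i j = (B i j : ℝ) - (A i j : ℝ))
    (hAG : ∃ v : Fin ν → ℝ, (∀ j, 0 < v j) ∧ Γ.mulVec v = 0)
    (P : Finset (Fin n)) (hPne : P.Nonempty)
    (hsiphon : ∀ j, (∃ i ∈ P, 0 < B i j) → ∃ i ∈ P, 0 < A i j)
    (hcritical : ¬ ∃ lam : Fin n → ℝ, (∀ i, 0 ≤ lam i) ∧ lam ≠ 0 ∧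
        (∀ i, lam i ≠ 0 → i ∈ P) ∧ Matrix.vecMul lam Γ = 0) :
    ¬ ∃ (q : ℕ) (C : Matrix (Fin q) (Fin ν) ℝ),
        (∀ r : Fin ν → ℝ, C.mulVec r = 0 ↔ Γ.mulVec r = 0) ∧
        ∀ R, IsAdmissible A R → ∀ x : Fin n → ℝ, (∀ i, 0 ≤ x i) →
          dini (fun y => ‖C.mulVec (R y)‖) (fun y => Γ.mulVec (R y)) x ≤ 0 := by
  rintro ⟨q, C, hker, hC : IsRobustLyapunovNorm A Γ C⟩
  obtain ⟨v, hv, hΓv⟩ := hAG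
  obtain ⟨u, hu, hu_out, hu_pos⟩ :=
    exists_nonneg_mulVec_pos_of_critical_siphon hΓ hv hΓv hsiphon hcritical
  obtain ⟨i₀, hi₀⟩ := hPne
  have hCu : 0 < ‖C *ᵥ u‖ :=
    norm_pos_iff.2 fun h => (hu_pos i₀ hi₀).ne' (by rw [(hker u).1 h, Pi.zero_apply])
  have hproduced : ∀ᶠ t : ℝ in atTop, ∀ i ∈ P, 0 < (Γ *ᵥ (1 + t • u)) i := by
    refine (eventually_all_finset P).2 fun i hi => ?_
    simp only [mulVec_add, mulVec_smul, Pi.add_apply, Pi.smul_apply, smul_eq_mul]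
    exact (tendsto_atTop_add_const_left _ _
      (tendsto_id.atTop_mul_const (hu_pos i hi))).eventually_gt_atTop 0
  have hbounded : ∀ᶠ t : ℝ in atTop, ‖C *ᵥ (1 + t • u)‖ ≤ ‖C *ᵥ 1‖ := by
    filter_upwards [hproduced, eventually_ge_atTop 0] with t ht ht₀
    refine hC.norm_mulVec_add_smul_le (fun _ => one_pos) hu ht₀ fun j hj => ?_
    obtain ⟨i, hi, hA⟩ := hu_out j hj
    exact ⟨i, hA, ht i hi⟩
  have hgrowing : Tendsto (fun t : ℝ => ‖C *ᵥ (1 + t • u)‖) atTop atTop := by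
    refine tendsto_atTop_mono' _ ?_
      (tendsto_atTop_add_const_right _ (-‖C *ᵥ 1‖) (tendsto_id.atTop_mul_const hCu))
    filter_upwards [eventually_ge_atTop 0] with t ht
    calc id t * ‖C *ᵥ u‖ + -‖C *ᵥ 1‖ = ‖t • C *ᵥ u‖ - ‖-(C *ᵥ 1)‖ := by
          rw [norm_smul, norm_neg, Real.norm_of_nonneg ht, id]; ring
      _ ≤ ‖C *ᵥ (1 + t • u)‖ := by
          simpa [mulVec_add, mulVec_smul, add_comm] using norm_sub_norm_le (t • C *ᵥ u) (-(C *ᵥ 1))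
  obtain ⟨t, hbig, hsmall⟩ := ((hgrowing.eventually_gt_atTop _).and hbounded).exists
  exact hsmall.not_gt hbig

/-- Theorem 5.5, part 3 (convex ℓ∞ form): a conservative network satisfying AG with a
one-dimensional `ker Γ` and a critical siphon admits no convex
piecewise-linear-in-rates robust Lyapunov function `‖C R(x)‖_∞`. -/
theorem stmt15 {n ν : ℕ} (A B : Matrix (Fin n) (Fin ν) ℕ)
    (Γ : Matrix (Fin n) (Fin ν) ℝ)
    (hΓ : ∀ i j, Γ i j = (B i j : ℝ) - (A i j : ℝ))
    (w : Fin n → ℝ) (hw : ∀ i, 0 < w i) (hcons : Matrix.vecMul w Γ = 0)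
    (hAG : ∃ v : Fin ν → ℝ, (∀ j, 0 < v j) ∧ Γ.mulVec v = 0)
    (hker1 : Module.finrank ℝ ↥(LinearMap.ker Γ.mulVecLin) = 1)
    (P : Finset (Fin n)) (hPne : P.Nonempty)
    (hsiphon : ∀ j, (∃ i ∈ P, 0 < B i j) → ∃ i ∈ P, 0 < A i j)
    (hcritical : ¬ ∃ lam : Fin n → ℝ, (∀ i, 0 ≤ lam i) ∧ lam ≠ 0 ∧
        (∀ i, lam i ≠ 0 → i ∈ P) ∧ Matrix.vecMul lam Γ = 0) :
    ¬ ∃ (q : ℕ) (C : Matrix (Fin q) (Fin ν) ℝ),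
        (∀ r : Fin ν → ℝ, C.mulVec r = 0 ↔ Γ.mulVec r = 0) ∧
        ∀ R, IsAdmissible A R → ∀ x : Fin n → ℝ, (∀ i, 0 ≤ x i) →
          dini (fun y => ‖C.mulVec (R y)‖) (fun y => Γ.mulVec (R y)) x ≤ 0 :=
  stmt15_general A B Γ hΓ hAG P hPne hsiphon hcritical
end

section
/- Let C ∈ ℝ^{q×ν} and suppose that for every ℓ = 1,…,s there exists Λ̃^ℓ ∈ ℝ^{q×q} with C Γ^ℓ = Λ̃^ℓ C and μ_∞(Λ̃^ℓ) := max_k ( Λ̃^ℓ_{kk} + Σ_{j≠k} |Λ̃^ℓ_{kj}| ) ≤ 0. Then for every admissible kinetics R ∈ K_A and every x ∈ ℝ≥0ⁿ, the matrix J₁(x) = (∂R/∂x)(x) Γ ∈ ℝ^{ν×ν} satisfies μ_C(J₁(x)) ≤ 0, where μ_C(J) := limsup_{h→0⁺} (1/h) ( sup{ ‖C (I + h J) ξ‖_∞ : ξ ∈ ℝ^ν, ‖C ξ‖_∞ ≤ 1 } − 1 ); in particular, for every h ≥ 0 and every ξ ∈ ℝ^ν, ‖C(I + h J₁(x))ξ‖_∞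 ≤ ‖I + h Σ_ℓ ρ_ℓ Λ̃^ℓ‖_∞ ‖Cξ‖_∞ with ρ_ℓ = ∂R_{j_ℓ}/∂x_{i_ℓ}(x) ≥ 0, where ‖·‖_∞ on matrices denotes the operator norm induced by the ℓ∞ vector norm. -/
/-!
Since `∂R_j/∂x_i = 0` off the support of `A`, the Jacobian is `J₁ = ∑_ℓ ρ_ℓ Γ^ℓ` with `ρ_ℓ ≥ 0`,
so `C J₁ = Λ C` for `Λ = ∑_ℓ ρ_ℓ Λ̃^ℓ`, and `μ_∞(Λ) ≤ 0` because the rowwise condition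
`μ_∞ ≤ 0` is stable under nonnegative combinations. Hence `C (I + hJ₁) ξ = (I + hΛ) C ξ`, which
gives the explicit bound; for small `h > 0` the diagonal of `I + hΛ` is nonnegative, so every
absolute row sum of `I + hΛ` is `1 + h (Λ_kk + ∑_{k' ≠ k} |Λ_kk'|) ≤ 1`, i.e. `‖I + hΛ‖_∞ ≤ 1`.
-/

open Filter Set Topology

/-- Operator norm on square matrices induced by the ℓ∞ vector norm. -/
noncomputable def opNormInf {q : ℕ} (M : Matrix (Fin q) (Fin q) ℝ) : ℝ :=
  sSup {a : ℝ | ∃ v : Fin q → ℝ, ‖v‖ ≤ 1 ∧ a = ‖M.mulVec v‖}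

open Finset Matrix

/-- An unbounded limsup in `ℝ` has the junk value `0`, so the bound holds in that case too. -/
lemma Real.limsup_nonpos_of_eventually_nonpos {ι : Type*} {f : Filter ι} {u : ι → ℝ}
    (h : ∀ᶠ x in f, u x ≤ 0) : limsup u f ≤ 0 := by
  by_cases hu : f.IsCoboundedUnder (· ≤ ·) u
  · exact limsup_le_of_le hu h
  · rw [Real.limsup_of_not_isCoboundedUnder hu]

namespace Matrix

/-- `μ_∞(M) ≤ 0`, written row by row. -/
def IsInfLogNormNonpos {ι : Type*} [Fintype ι] [DecidableEq ι] (M : Matrix ι ι ℝ) : Prop :=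
  ∀ k, M k k + ∑ k' ∈ univ.erase k, |M k k'| ≤ 0

namespace IsInfLogNormNonpos

variable {ι : Type*} [Fintype ι] [DecidableEq ι] {M N : Matrix ι ι ℝ}

lemma zero : IsInfLogNormNonpos (0 : Matrix ι ι ℝ) := by
  simp [IsInfLogNormNonpos]

lemma add (hM : IsInfLogNormNonpos M) (hN : IsInfLogNormNonpos N) :
    IsInfLogNormNonpos (M + N) := fun k => by
  have hrow : ∑ k' ∈ univ.erase k, |(M + N) k k'| ≤
      ∑ k' ∈ univ.erase k, |M k k'| + ∑ k' ∈ univ.erase k, |N k k'| := by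
    rw [← sum_add_distrib]
    exact sum_le_sum fun k' _ => abs_add_le _ _
  simp only [add_apply] at hrow ⊢
  linarith [hM k, hN k]

lemma smul (hM : IsInfLogNormNonpos M) {c : ℝ} (hc : 0 ≤ c) : IsInfLogNormNonpos (c • M) :=
  fun k => by
    simp only [smul_apply, smul_eq_mul, abs_mul, abs_of_nonneg hc, ← mul_sum, ← mul_add]
    exact mul_nonpos_of_nonneg_of_nonpos hc (hM k)

lemma sum {α : Type*} {s : Finset α} {M : α → Matrix ι ι ℝ}
    (hM : ∀ a ∈ s, IsInfLogNormNonpos (M a)) : IsInfLogNormNonpos (∑ a ∈ s, M a) :=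
  Finset.sum_induction M _ (fun _ _ => add) zero hM

end IsInfLogNormNonpos

end Matrix

section OpNormInf

attribute [local instance] Matrix.linftyOpNormedAddCommGroup

variable {q : ℕ}

lemma opNormInf_eq_linfty_opNorm (M : Matrix (Fin q) (Fin q) ℝ) : opNormInf M = ‖M‖ := by
  rw [Matrix.linfty_opNorm_eq_opNorm, ← ContinuousLinearMap.sSup_unitClosedBall_eq_norm]
  unfold opNormInf
  congr 1
  ext a
  simp [eq_comm]

lemma opNormInf_nonneg (M : Matrix (Fin q) (Fin q) ℝ) : 0 ≤ opNormInf M :=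
  opNormInf_eq_linfty_opNorm M ▸ norm_nonneg M

lemma norm_mulVec_le_opNormInf (M : Matrix (Fin q) (Fin q) ℝ) (v : Fin q → ℝ) :
    ‖M *ᵥ v‖ ≤ opNormInf M * ‖v‖ :=
  opNormInf_eq_linfty_opNorm M ▸ Matrix.linfty_opNorm_mulVec M v

lemma opNormInf_le_of_sum_abs_le (M : Matrix (Fin q) (Fin q) ℝ) {c : ℝ} (hc : 0 ≤ c)
    (hM : ∀ k, ∑ k', |M k k'| ≤ c) : opNormInf M ≤ c := by
  lift c to NNReal using hc
  rw [opNormInf_eq_linfty_opNorm, Matrix.linfty_opNorm_def, NNReal.coe_le_coe]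
  refine Finset.sup_le fun k _ => ?_
  rw [← NNReal.coe_le_coe, NNReal.coe_sum]
  simpa using hM k

end OpNormInf

namespace Matrix.IsInfLogNormNonpos

variable {q : ℕ} {M : Matrix (Fin q) (Fin q) ℝ}

lemma opNormInf_one_add_smul_le_one (hM : IsInfLogNormNonpos M) {h : ℝ} (h0 : 0 ≤ h)
    (hdiag : ∀ k, 0 ≤ 1 + h * M k k) : opNormInf (1 + h • M) ≤ 1 := by
  refine opNormInf_le_of_sum_abs_le _ zero_le_one fun k => ?_
  have hoff : ∀ k' ∈ univ.erase k, |(1 + h • M) k k'| = h * |M k k'| := fun k' hk' => by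
    simp [one_apply_ne' (ne_of_mem_erase hk'), abs_mul, abs_of_nonneg h0]
  rw [← add_sum_erase _ _ (mem_univ k), sum_congr rfl hoff, ← mul_sum]
  simp only [add_apply, one_apply_eq, smul_apply, smul_eq_mul, abs_of_nonneg (hdiag k)]
  nlinarith [hM k]

lemma eventually_opNormInf_one_add_smul_le_one (hM : IsInfLogNormNonpos M) :
    ∀ᶠ h in 𝓝[>] (0 : ℝ), opNormInf (1 + h • M) ≤ 1 := by
  have hdiag : ∀ k, ∀ᶠ h in 𝓝[>] (0 : ℝ), 0 ≤ 1 + h * M k k := fun k => by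
    have : Tendsto (fun h : ℝ => 1 + h * M k k) (𝓝 0) (𝓝 1) := by
      simpa using ((continuous_mul_const (M k k)).const_add 1).tendsto 0
    exact nhdsWithin_le_nhds (this.eventually (eventually_ge_nhds one_pos))
  filter_upwards [eventually_all.2 hdiag, self_mem_nhdsWithin] with h hh h0
  exact hM.opNormInf_one_add_smul_le_one (le_of_lt h0) hh

end Matrix.IsInfLogNormNonpos

section Intertwining

variable {q ν : ℕ} {C : Matrix (Fin q) (Fin ν) ℝ} {N : Matrix (Fin ν) (Fin ν) ℝ}
  {M : Matrix (Fin q) (Fin q) ℝ}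

lemma norm_mulVec_mulVec_le_opNormInf (hCN : C * N = M * C) (ξ : Fin ν → ℝ) :
    ‖C *ᵥ (N *ᵥ ξ)‖ ≤ opNormInf M * ‖C *ᵥ ξ‖ := by
  rw [mulVec_mulVec, hCN, ← mulVec_mulVec]
  exact norm_mulVec_le_opNormInf M _

lemma sSup_norm_mulVec_mulVec_le_opNormInf (hCN : C * N = M * C) :
    sSup {a : ℝ | ∃ ξ : Fin ν → ℝ, ‖C *ᵥ ξ‖ ≤ 1 ∧ a = ‖C *ᵥ (N *ᵥ ξ)‖} ≤ opNormInf M := by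
  refine csSup_le ⟨0, 0, by simp, by simp⟩ ?_
  rintro a ⟨ξ, hξ, rfl⟩
  calc ‖C *ᵥ (N *ᵥ ξ)‖ ≤ opNormInf M * ‖C *ᵥ ξ‖ := norm_mulVec_mulVec_le_opNormInf hCN ξ
    _ ≤ opNormInf M := mul_le_of_le_one_right (opNormInf_nonneg M) hξ

end Intertwining

lemma of_mul_eq_sum_smul_GammaEll {n ν : ℕ} (D : Fin ν → Fin n → ℝ)
    (Γ : Matrix (Fin n) (Fin ν) ℝ) :
    Matrix.of D * Γ = ∑ i, ∑ j, D j i • GammaEll Γ i j := by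
  ext j' k
  simp [mul_apply, Matrix.sum_apply, GammaEll, vecMulVec_apply, Pi.single_apply]

lemma mul_of_mul_eq_of_mul_GammaEll_eq {n ν q : ℕ} (A : Matrix (Fin n) (Fin ν) ℕ)
    (Γ : Matrix (Fin n) (Fin ν) ℝ) (C : Matrix (Fin q) (Fin ν) ℝ)
    (Λt : Fin n → Fin ν → Matrix (Fin q) (Fin q) ℝ)
    (hΛ : ∀ i j, 0 < A i j → C * GammaEll Γ i j = Λt i j * C)
    (D : Fin ν → Fin n → ℝ) (hD : ∀ i j, A i j = 0 → D j i = 0) :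
    C * (Matrix.of D * Γ) =
      (∑ i, ∑ j, if 0 < A i j then D j i • Λt i j else 0) * C := by
  simp only [of_mul_eq_sum_smul_GammaEll, Matrix.mul_sum, Matrix.sum_mul]
  refine sum_congr rfl fun i _ => sum_congr rfl fun j _ => ?_
  split_ifs with hij
  · rw [Matrix.mul_smul, hΛ i j hij, Matrix.smul_mul]
  · simp [hD i j (Nat.eq_zero_of_not_pos hij)]

/-- Contraction theorem, part 1: if `C Γ^ℓ = Λ̃^ℓ C` with `μ_∞(Λ̃^ℓ) ≤ 0` for all `ℓ`,
then the logarithmic norm `μ_C` of the extent-of-reaction Jacobian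
`J₁(x) = ∂R/∂x(x) Γ` is nonpositive, together with the corresponding explicit
`ℓ∞`-norm bound. -/
theorem stmt17 {n ν q : ℕ} (A : Matrix (Fin n) (Fin ν) ℕ)
    (Γ : Matrix (Fin n) (Fin ν) ℝ)
    (C : Matrix (Fin q) (Fin ν) ℝ)
    (Λt : Fin n → Fin ν → Matrix (Fin q) (Fin q) ℝ)
    (hΛ : ∀ i j, 0 < A i j →
      C * GammaEll Γ i j = Λt i j * C ∧
      ∀ k, Λt i j k k + ∑ k' ∈ Finset.univ.erase k, |Λt i j k k'| ≤ 0) :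
    ∀ R, IsAdmissible A R → ∀ x : Fin n → ℝ, (∀ i, 0 ≤ x i) →
      (Filter.limsup (fun h : ℝ =>
          (sSup {a : ℝ | ∃ ξ : Fin ν → ℝ, ‖C.mulVec ξ‖ ≤ 1 ∧
              a = ‖C.mulVec ((1 + h • ((Matrix.of fun (j : Fin ν) (i : Fin n) =>
                pd R x j i) * Γ)).mulVec ξ)‖} - 1) / h)
          (nhdsWithin 0 (Set.Ioi 0)) ≤ 0)
      ∧ ∀ h : ℝ, 0 ≤ h → ∀ ξ : Fin ν → ℝ,
          ‖C.mulVec ((1 + h • ((Matrix.of fun (j : Fin ν) (i : Fin n) =>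
              pd R x j i) * Γ)).mulVec ξ)‖ ≤
            opNormInf (1 + h • ∑ i : Fin n, ∑ j : Fin ν,
              (if 0 < A i j then pd R x j i • Λt i j else 0)) * ‖C.mulVec ξ‖ := by
  intro R hR x hx
  set J := Matrix.of (fun j i => pd R x j i) * Γ
  set Λ := ∑ i : Fin n, ∑ j : Fin ν, (if 0 < A i j then pd R x j i • Λt i j else 0)
  have hCJ : C * J = Λ * C :=
    mul_of_mul_eq_of_mul_GammaEll_eq A Γ C Λt (fun i j hij => (hΛ i j hij).1) _
      (hR.deriv_zero x hx)
  have hstep : ∀ h : ℝ, C * (1 + h • J) = (1 + h • Λ) * C := fun h => by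
    rw [Matrix.mul_add, Matrix.add_mul, Matrix.mul_one, Matrix.one_mul, Matrix.mul_smul, hCJ,
      Matrix.smul_mul]
  have hμ : Λ.IsInfLogNormNonpos := IsInfLogNormNonpos.sum fun i _ =>
    IsInfLogNormNonpos.sum fun j _ => by
      split_ifs with hij
      · exact IsInfLogNormNonpos.smul (hΛ i j hij).2 (hR.deriv_nonneg x hx i j hij)
      · exact IsInfLogNormNonpos.zero
  refine ⟨Real.limsup_nonpos_of_eventually_nonpos ?_,
    fun h _ => norm_mulVec_mulVec_le_opNormInf (hstep h)⟩
  filter_upwards [hμ.eventually_opNormInf_one_add_smul_le_one, self_mem_nhdsWithin]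
    with h hh h0
  exact div_nonpos_of_nonpos_of_nonneg
    (sub_nonpos.2 ((sSup_norm_mulVec_mulVec_le_opNormInf (hstep h)).trans hh)) (le_of_lt h0)
end
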